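/- arXiv:1508.05114 — 9 statements merged into one kernel-verified Lean document; each statement's English description precedes it below -/
import Mathlib

section
/- Suppose the maps M_{xy}, M_{x0}, M_{0y} satisfy conditions (i) Continuity, (ii) Monotonicity and (iii) Limits. Then there exist u ∈ ℝ^X and v ∈ ℝ^Y solving the nonlinear Bernstein–Schrödinger system: M_{x0}(u_x) + Σ_{y∈Y} M_{xy}(u_x, v_y) = n_x for every x ∈ X and M_{0y}(v_y) + Σ_{x∈X} M_{xy}(u_x, v_y) = m_y for every y ∈ Y. -/
/-!
For fixed `v`, the left side of the `x`-equation is continuous and antitone in `u_x`, tends to `+∞`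
at `-∞` and to `0 < n_x` at `+∞`, so the equation has a largest solution `U(v)_x`; since the left
side also decreases in `v`, the map `U` is antitone. The same holds for the largest solution `V(u)`
of the `y`-equations. Both are bounded below, since `M_{x0}(u_x) ≤ n_x` forces `u_x` above a
constant; so if `a ≤ U` and `b ≤ V`, the monotone map `V ∘ U` sends everything into the order
interval `[b, V(a)]`, and by Tarski's theorem it has a fixed point `v`: `(U(v), v)` is a solution.
-/

open Filter Topology Set Function

theorem Monotone.exists_isFixedPt_of_le_of_le {α : Type*} [ConditionallyCompleteLattice α]
    {f : α → α} (hf : Monotone f) {a b : α} (hab : a ≤ b) (ha : a ≤ f a) (hb : f b ≤ b) :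
    ∃ c ∈ Icc a b, IsFixedPt f c := by
  have : Fact (a ≤ b) := ⟨hab⟩
  let g : Icc a b →o Icc a b :=
    { toFun := fun c => ⟨f c, ha.trans (hf c.2.1), (hf c.2.2).trans hb⟩
      monotone' := fun _ _ h => hf h }
  exact ⟨g.lfp, g.lfp.2, congrArg Subtype.val g.map_lfp⟩

section LargestSolution

variable {f : ℝ → ℝ} {t : ℝ}

theorem Antitone.bddAbove_setOf_le_apply (hf : Antitone f) {b : ℝ} (hb : f b < t) :
    BddAbove {u | t ≤ f u} :=
  ⟨b, fun _ hu => le_of_not_gt fun hbu => (hu.trans (hf hbu.le)).not_gt hb⟩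

theorem Continuous.apply_csSup_setOf_le_apply (hc : Continuous f) (hf : Antitone f) {a b : ℝ}
    (ha : t ≤ f a) (hb : f b < t) : f (sSup {u | t ≤ f u}) = t := by
  set s := sSup {u | t ≤ f u}
  have hbdd := hf.bddAbove_setOf_le_apply hb
  have hmem : t ≤ f s := (isClosed_le continuous_const hc).csSup_mem ⟨a, ha⟩ hbdd
  refine le_antisymm (not_lt.1 fun hlt => ?_) hmem
  -- otherwise `t < f u` for some `u` just to the right of `s`
  obtain ⟨u, hfu, hsu⟩ : ∃ u, t < f u ∧ s < u :=
    (((hc.tendsto s).eventually (eventually_gt_nhds hlt)).filter_mono nhdsWithin_le_nhds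
      |>.and (self_mem_nhdsWithin : Ioi s ∈ 𝓝[>] s)).exists
  exact (le_csSup hbdd hfu.le).not_gt hsu

end LargestSolution

namespace BernsteinSchrodinger

variable {X Y : Type*}

/-- Conditions (i)–(iii) for the `x`-equations; those for the `y`-equations are the same
conditions for `fun y x v u => M x y u v` and `M0y`. -/
structure RowConditions (M : X → Y → ℝ → ℝ → ℝ) (Mx0 : X → ℝ → ℝ) : Prop where
  continuous : ∀ x y v, Continuous fun u => M x y u v
  continuous_single : ∀ x, Continuous (Mx0 x)
  antitone_left : ∀ x y v, Antitone fun u => M x y u v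
  antitone_right : ∀ x y u, Antitone (M x y u)
  antitone_single : ∀ x, Antitone (Mx0 x)
  tendsto_atTop : ∀ x y v, Tendsto (fun u => M x y u v) atTop (𝓝 0)
  tendsto_single_atTop : ∀ x, Tendsto (Mx0 x) atTop (𝓝 0)
  tendsto_single_atBot : ∀ x, Tendsto (Mx0 x) atBot atTop

theorem RowConditions.nonneg {M : X → Y → ℝ → ℝ → ℝ} {Mx0 : X → ℝ → ℝ}
    (h : RowConditions M Mx0) (x : X) (y : Y) (u v : ℝ) : 0 ≤ M x y u v :=
  (h.antitone_left x y v).le_of_tendsto (h.tendsto_atTop x y v) u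

theorem RowConditions.exists_lt_single {M : X → Y → ℝ → ℝ → ℝ} {Mx0 : X → ℝ → ℝ}
    (h : RowConditions M Mx0) (x : X) (t : ℝ) : ∃ a, t < Mx0 x a :=
  ((h.tendsto_single_atBot x).eventually_gt_atTop t).exists

variable [Fintype Y]

def rowMargin (M : X → Y → ℝ → ℝ → ℝ) (Mx0 : X → ℝ → ℝ) (v : Y → ℝ) (x : X) (u : ℝ) : ℝ :=
  Mx0 x u + ∑ y, M x y u (v y)

noncomputable def rowSolution (M : X → Y → ℝ → ℝ → ℝ) (Mx0 : X → ℝ → ℝ) (n : X → ℝ)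
    (v : Y → ℝ) (x : X) : ℝ :=
  sSup {u | n x ≤ rowMargin M Mx0 v x u}

namespace RowConditions

variable {M : X → Y → ℝ → ℝ → ℝ} {Mx0 : X → ℝ → ℝ} {n : X → ℝ}

theorem continuous_rowMargin (h : RowConditions M Mx0) (v : Y → ℝ) (x : X) :
    Continuous (rowMargin M Mx0 v x) :=
  (h.continuous_single x).add (continuous_finsetSum _ fun y _ => h.continuous x y (v y))

theorem antitone_rowMargin (h : RowConditions M Mx0) (v : Y → ℝ) (x : X) :
    Antitone (rowMargin M Mx0 v x) := fun _ _ huu' =>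
  add_le_add (h.antitone_single x huu')
    (Finset.sum_le_sum fun y _ => h.antitone_left x y (v y) huu')

theorem rowMargin_le_of_le (h : RowConditions M Mx0) {v v' : Y → ℝ} (hvv' : v ≤ v') (x : X)
    (u : ℝ) : rowMargin M Mx0 v' x u ≤ rowMargin M Mx0 v x u :=
  add_le_add le_rfl (Finset.sum_le_sum fun y _ => h.antitone_right x y u (hvv' y))

theorem single_le_rowMargin (h : RowConditions M Mx0) (v : Y → ℝ) (x : X) (u : ℝ) :
    Mx0 x u ≤ rowMargin M Mx0 v x u :=
  le_add_of_nonneg_right (Finset.sum_nonneg fun y _ => h.nonneg x y u (v y))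

theorem tendsto_rowMargin_atTop (h : RowConditions M Mx0) (v : Y → ℝ) (x : X) :
    Tendsto (rowMargin M Mx0 v x) atTop (𝓝 0) := by
  have h0 : Tendsto (rowMargin M Mx0 v x) atTop (𝓝 (0 + ∑ _y : Y, 0)) :=
    (h.tendsto_single_atTop x).add (tendsto_finsetSum _ fun y _ => h.tendsto_atTop x y (v y))
  simpa using h0

theorem exists_rowMargin_lt (h : RowConditions M Mx0) (v : Y → ℝ) (x : X) {t : ℝ} (ht : 0 < t) :
    ∃ b, rowMargin M Mx0 v x b < t :=
  ((h.tendsto_rowMargin_atTop v x).eventually (eventually_lt_nhds ht)).exists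

theorem bddAbove_setOf_le_rowMargin (h : RowConditions M Mx0) (hn : ∀ x, 0 < n x)
    (v : Y → ℝ) (x : X) : BddAbove {u | n x ≤ rowMargin M Mx0 v x u} :=
  have ⟨_, hb⟩ := h.exists_rowMargin_lt v x (hn x)
  (h.antitone_rowMargin v x).bddAbove_setOf_le_apply hb

theorem rowMargin_rowSolution (h : RowConditions M Mx0) (hn : ∀ x, 0 < n x) (v : Y → ℝ)
    (x : X) : rowMargin M Mx0 v x (rowSolution M Mx0 n v x) = n x :=
  have ⟨_, ha⟩ := h.exists_lt_single x (n x)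
  have ⟨_, hb⟩ := h.exists_rowMargin_lt v x (hn x)
  (h.continuous_rowMargin v x).apply_csSup_setOf_le_apply (h.antitone_rowMargin v x)
    (ha.le.trans (h.single_le_rowMargin v x _)) hb

theorem antitone_rowSolution (h : RowConditions M Mx0) (hn : ∀ x, 0 < n x) :
    Antitone (rowSolution M Mx0 n) := fun v v' hvv' x =>
  have ⟨a, ha⟩ := h.exists_lt_single x (n x)
  csSup_le_csSup (h.bddAbove_setOf_le_rowMargin hn v x)
    ⟨a, ha.le.trans (h.single_le_rowMargin v' x a)⟩
    fun _ hu => hu.trans (h.rowMargin_le_of_le hvv' x _)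

theorem exists_le_rowSolution (h : RowConditions M Mx0) (hn : ∀ x, 0 < n x) :
    ∃ a : X → ℝ, ∀ v, a ≤ rowSolution M Mx0 n v := by
  choose a ha using fun x => h.exists_lt_single x (n x)
  exact ⟨a, fun v x => le_csSup (h.bddAbove_setOf_le_rowMargin hn v x)
    ((ha x).le.trans (h.single_le_rowMargin v x (a x)))⟩

end RowConditions

theorem exists_solution [Fintype X] {M : X → Y → ℝ → ℝ → ℝ} {Mx0 : X → ℝ → ℝ}
    {M0y : Y → ℝ → ℝ} {n : X → ℝ} {m : Y → ℝ} (hrow : RowConditions M Mx0)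
    (hcol : RowConditions (fun y x v u => M x y u v) M0y) (hn : ∀ x, 0 < n x)
    (hm : ∀ y, 0 < m y) :
    ∃ (u : X → ℝ) (v : Y → ℝ),
      (∀ x, Mx0 x (u x) + ∑ y, M x y (u x) (v y) = n x) ∧
      (∀ y, M0y y (v y) + ∑ x, M x y (u x) (v y) = m y) := by
  set U := rowSolution M Mx0 n
  set V := rowSolution (fun y x v u => M x y u v) M0y m
  obtain ⟨a, ha⟩ := hrow.exists_le_rowSolution hn
  obtain ⟨b, hb⟩ := hcol.exists_le_rowSolution hm
  have hV : Antitone V := hcol.antitone_rowSolution hm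
  have hVU : Monotone (V ∘ U) := hV.comp (hrow.antitone_rowSolution hn)
  have hle : ∀ w, V (U w) ≤ V a := fun w => hV (ha w)
  obtain ⟨v, -, hv⟩ := hVU.exists_isFixedPt_of_le_of_le ((hb _).trans (hle b)) (hb _) (hle _)
  refine ⟨U v, v, hrow.rowMargin_rowSolution hn v, fun y => ?_⟩
  exact congrFun hv y ▸ hcol.rowMargin_rowSolution hm (U v) y

end BernsteinSchrodinger

open BernsteinSchrodinger in
theorem bernstein_schrodinger_existence_general
    {X Y : Type*} [Fintype X] [Fintype Y]
    (n : X → ℝ) (m : Y → ℝ) (hn : ∀ x, 0 < n x) (hm : ∀ y, 0 < m y)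
    (M : X → Y → ℝ → ℝ → ℝ) (Mx0 : X → ℝ → ℝ) (M0y : Y → ℝ → ℝ)
    -- (i) Continuity
    (hMcont : ∀ x y, Continuous fun p : ℝ × ℝ => M x y p.1 p.2)
    (hMx0cont : ∀ x, Continuous (Mx0 x))
    (hM0ycont : ∀ y, Continuous (M0y y))
    -- (ii) Monotonicity
    (hMmono : ∀ x y (u u' v v' : ℝ), u ≤ u' → v ≤ v' → M x y u' v' ≤ M x y u v)
    (hMx0mono : ∀ x, Antitone (Mx0 x))
    (hM0ymono : ∀ y, Antitone (M0y y))
    -- (iii) Limits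
    (hMtop1 : ∀ x y v, Tendsto (fun u => M x y u v) atTop (𝓝 0))
    (hMtop2 : ∀ x y u, Tendsto (fun v => M x y u v) atTop (𝓝 0))
    (hMx0top : ∀ x, Tendsto (Mx0 x) atTop (𝓝 0))
    (hMx0bot : ∀ x, Tendsto (Mx0 x) atBot atTop)
    (hM0ytop : ∀ y, Tendsto (M0y y) atTop (𝓝 0))
    (hM0ybot : ∀ y, Tendsto (M0y y) atBot atTop) :
    ∃ (u : X → ℝ) (v : Y → ℝ),
      (∀ x, Mx0 x (u x) + ∑ y, M x y (u x) (v y) = n x) ∧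
      (∀ y, M0y y (v y) + ∑ x, M x y (u x) (v y) = m y) := by
  have hrow : RowConditions M Mx0 :=
    ⟨fun x y v => (hMcont x y).comp (continuous_id.prodMk continuous_const), hMx0cont,
      fun x y v _ _ h => hMmono x y _ _ v v h le_rfl,
      fun x y u _ _ h => hMmono x y u u _ _ le_rfl h, hMx0mono, hMtop1, hMx0top, hMx0bot⟩
  have hcol : RowConditions (fun y x v u => M x y u v) M0y :=
    ⟨fun y x u => (hMcont x y).comp (continuous_const.prodMk continuous_id), hM0ycont,
      fun y x u _ _ h => hMmono x y u u _ _ le_rfl h,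
      fun y x v _ _ h => hMmono x y _ _ v v h le_rfl, hM0ymono, fun y x => hMtop2 x y, hM0ytop,
      hM0ybot⟩
  exact exists_solution hrow hcol hn hm

/-- Existence of a solution to the nonlinear Bernstein–Schrödinger system under
continuity, monotonicity and limit conditions. -/
theorem bernstein_schrodinger_existence
    {X Y : Type*} [Fintype X] [Fintype Y]
    (n : X → ℝ) (m : Y → ℝ) (hn : ∀ x, 0 < n x) (hm : ∀ y, 0 < m y)
    (M : X → Y → ℝ → ℝ → ℝ) (Mx0 : X → ℝ → ℝ) (M0y : Y → ℝ → ℝ)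
    -- (i) Continuity
    (hMcont : ∀ x y, Continuous fun p : ℝ × ℝ => M x y p.1 p.2)
    (hMx0cont : ∀ x, Continuous (Mx0 x))
    (hM0ycont : ∀ y, Continuous (M0y y))
    -- (ii) Monotonicity
    (hMmono : ∀ x y (u u' v v' : ℝ), u ≤ u' → v ≤ v' → M x y u' v' ≤ M x y u v)
    (hMx0mono : ∀ x, Antitone (Mx0 x))
    (hM0ymono : ∀ y, Antitone (M0y y))
    -- (iii) Limits
    (hMtop1 : ∀ x y v, Tendsto (fun u => M x y u v) atTop (𝓝 0))
    (hMbot1 : ∀ x y v, Tendsto (fun u => M x y u v) atBot atTop)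
    (hMtop2 : ∀ x y u, Tendsto (fun v => M x y u v) atTop (𝓝 0))
    (hMbot2 : ∀ x y u, Tendsto (fun v => M x y u v) atBot atTop)
    (hMx0top : ∀ x, Tendsto (Mx0 x) atTop (𝓝 0))
    (hMx0bot : ∀ x, Tendsto (Mx0 x) atBot atTop)
    (hM0ytop : ∀ y, Tendsto (M0y y) atTop (𝓝 0))
    (hM0ybot : ∀ y, Tendsto (M0y y) atBot atTop) :
    ∃ (u : X → ℝ) (v : Y → ℝ),
      (∀ x, Mx0 x (u x) + ∑ y, M x y (u x) (v y) = n x) ∧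
      (∀ y, M0y y (v y) + ∑ x, M x y (u x) (v y) = m y) :=
  bernstein_schrodinger_existence_general n m hn hm M Mx0 M0y hMcont hMx0cont hM0ycont hMmono
    hMx0mono hM0ymono hMtop1 hMtop2 hMx0top hMx0bot hM0ytop hM0ybot
end

section
/- Suppose the maps M_{xy}, M_{x0}, M_{0y} satisfy conditions (i) Continuity, (ii) Monotonicity and (iii) Limits, and are moreover continuously differentiable with M_{x0} and M_{0y} strictly decreasing. Then the nonlinear Bernstein–Schrödinger system has at most one solution (u, v) ∈ ℝ^X × ℝ^Y. -/
/-!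
If `(u, v)` and `(u', v')` both solve the system, monotonicity of `M` makes `(u ⊔ u', v ⊓ v')`
satisfy the `X`-equations with `≥` and the `Y`-equations with `≤`. Summing all equations, the
coupling terms `M x y` cancel, so
`∑ Mx0 (u ⊔ u') - ∑ M0y (v ⊓ v') ≥ ∑ n - ∑ m = ∑ Mx0 u - ∑ M0y v`.
As `Mx0` and `M0y` are decreasing, this forces termwise equality, and strict monotonicity gives
`u ⊔ u' = u` and `v ⊓ v' = v`. Exchanging the two solutions yields the reverse inequalities.
-/

open Filter Topology Finset

namespace BernsteinSchrodinger

variable {X Y : Type*} [Fintype X] [Fintype Y]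
  (M : X → Y → ℝ → ℝ → ℝ) (Mx0 : X → ℝ → ℝ) (M0y : Y → ℝ → ℝ)

def rowMass (u : X → ℝ) (v : Y → ℝ) (x : X) : ℝ :=
  Mx0 x (u x) + ∑ y, M x y (u x) (v y)

def colMass (u : X → ℝ) (v : Y → ℝ) (y : Y) : ℝ :=
  M0y y (v y) + ∑ x, M x y (u x) (v y)

def IsSolution (n : X → ℝ) (m : Y → ℝ) (u : X → ℝ) (v : Y → ℝ) : Prop :=
  (∀ x, rowMass M Mx0 u v x = n x) ∧ ∀ y, colMass M M0y u v y = m y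

theorem sum_rowMass_sub_sum_colMass (u : X → ℝ) (v : Y → ℝ) :
    ∑ x, rowMass M Mx0 u v x - ∑ y, colMass M M0y u v y =
      ∑ x, Mx0 x (u x) - ∑ y, M0y y (v y) := by
  simp only [rowMass, colMass, sum_add_distrib]
  rw [sum_comm (s := univ (α := Y))]
  ring

variable {M Mx0 M0y}
  (hM : ∀ x y (u u' v v' : ℝ), u ≤ u' → v ≤ v' → M x y u' v' ≤ M x y u v)
include hM

omit [Fintype X] in
theorem rowMass_le_rowMass_of_eq_of_le {u u' : X → ℝ} {v v' : Y → ℝ} {x : X}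
    (hu : u x = u' x) (hv : v' ≤ v) : rowMass M Mx0 u v x ≤ rowMass M Mx0 u' v' x := by
  unfold rowMass
  rw [hu]
  gcongr with y
  exact hM x y _ _ _ _ le_rfl (hv y)

omit [Fintype Y] in
theorem colMass_le_colMass_of_le_of_eq {u u' : X → ℝ} {v v' : Y → ℝ} {y : Y}
    (hu : u ≤ u') (hv : v y = v' y) : colMass M M0y u' v' y ≤ colMass M M0y u v y := by
  unfold colMass
  rw [hv]
  gcongr with x
  exact hM x y _ _ _ _ (hu x) le_rfl

variable {n : X → ℝ} {m : Y → ℝ} {u u' : X → ℝ} {v v' : Y → ℝ}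

theorem IsSolution.le_rowMass_sup_inf (h : IsSolution M Mx0 M0y n m u v)
    (h' : IsSolution M Mx0 M0y n m u' v') (x : X) :
    n x ≤ rowMass M Mx0 (u ⊔ u') (v ⊓ v') x := by
  rcases max_choice (u x) (u' x) with hx | hx
  · exact (h.1 x).symm.le.trans (rowMass_le_rowMass_of_eq_of_le hM hx.symm inf_le_left)
  · exact (h'.1 x).symm.le.trans (rowMass_le_rowMass_of_eq_of_le hM hx.symm inf_le_right)

theorem IsSolution.colMass_sup_inf_le (h : IsSolution M Mx0 M0y n m u v)
    (h' : IsSolution M Mx0 M0y n m u' v') (y : Y) :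
    colMass M M0y (u ⊔ u') (v ⊓ v') y ≤ m y := by
  rcases min_choice (v y) (v' y) with hy | hy
  · exact (colMass_le_colMass_of_le_of_eq hM le_sup_left hy.symm).trans (h.2 y).le
  · exact (colMass_le_colMass_of_le_of_eq hM le_sup_right hy.symm).trans (h'.2 y).le

theorem IsSolution.comparison (hMx0 : ∀ x, StrictAnti (Mx0 x)) (hM0y : ∀ y, StrictAnti (M0y y))
    (h : IsSolution M Mx0 M0y n m u v) (h' : IsSolution M Mx0 M0y n m u' v') :
    u' ≤ u ∧ v ≤ v' := by
  have hrow : ∀ x, Mx0 x ((u ⊔ u') x) ≤ Mx0 x (u x) := fun x => (hMx0 x).antitone le_sup_left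
  have hcol : ∀ y, M0y y (v y) ≤ M0y y ((v ⊓ v') y) := fun y => (hM0y y).antitone inf_le_left
  have hmass : ∑ x, Mx0 x (u x) - ∑ y, M0y y (v y) ≤
      ∑ x, Mx0 x ((u ⊔ u') x) - ∑ y, M0y y ((v ⊓ v') y) := by
    rw [← sum_rowMass_sub_sum_colMass, ← sum_rowMass_sub_sum_colMass,
      sum_congr rfl fun x _ => h.1 x, sum_congr rfl fun y _ => h.2 y]
    exact sub_le_sub (sum_le_sum fun x _ => h.le_rowMass_sup_inf hM h' x)
      (sum_le_sum fun y _ => h.colMass_sup_inf_le hM h' y)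
  have hrow_sum := sum_le_sum fun x (_ : x ∈ univ) => hrow x
  have hcol_sum := sum_le_sum fun y (_ : y ∈ univ) => hcol y
  have hrow_eq := (sum_eq_sum_iff_of_le fun x _ => hrow x).1 (by linarith)
  have hcol_eq := (sum_eq_sum_iff_of_le fun y _ => hcol y).1 (by linarith)
  refine ⟨fun x => ?_, fun y => ?_⟩
  · exact sup_eq_left.1 ((hMx0 x).injective (hrow_eq x (mem_univ x)))
  · exact inf_eq_left.1 ((hM0y y).injective (hcol_eq y (mem_univ y))).symm

end BernsteinSchrodinger

open BernsteinSchrodinger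

theorem bernstein_schrodinger_uniqueness_general
    {X Y : Type*} [Fintype X] [Fintype Y]
    (n : X → ℝ) (m : Y → ℝ)
    (M : X → Y → ℝ → ℝ → ℝ) (Mx0 : X → ℝ → ℝ) (M0y : Y → ℝ → ℝ)
    -- (ii) Monotonicity
    (hMmono : ∀ x y (u u' v v' : ℝ), u ≤ u' → v ≤ v' → M x y u' v' ≤ M x y u v)
    -- strict monotonicity of the singles terms
    (hMx0strict : ∀ x, StrictAnti (Mx0 x))
    (hM0ystrict : ∀ y, StrictAnti (M0y y))
    -- two solutions of the system
    (u u' : X → ℝ) (v v' : Y → ℝ)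
    (hu : ∀ x, Mx0 x (u x) + ∑ y, M x y (u x) (v y) = n x)
    (hv : ∀ y, M0y y (v y) + ∑ x, M x y (u x) (v y) = m y)
    (hu' : ∀ x, Mx0 x (u' x) + ∑ y, M x y (u' x) (v' y) = n x)
    (hv' : ∀ y, M0y y (v' y) + ∑ x, M x y (u' x) (v' y) = m y) :
    u = u' ∧ v = v' := by
  have h : IsSolution M Mx0 M0y n m u v := ⟨hu, hv⟩
  have h' : IsSolution M Mx0 M0y n m u' v' := ⟨hu', hv'⟩
  obtain ⟨hu'u, hvv'⟩ := h.comparison hMmono hMx0strict hM0ystrict h'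
  obtain ⟨huu', hv'v⟩ := h'.comparison hMmono hMx0strict hM0ystrict h
  exact ⟨le_antisymm huu' hu'u, le_antisymm hvv' hv'v⟩

/-- Uniqueness of the solution to the nonlinear Bernstein–Schrödinger system when the
maps are moreover continuously differentiable, with `M_{x0}` and `M_{0y}` strictly
decreasing. -/
theorem bernstein_schrodinger_uniqueness
    {X Y : Type*} [Fintype X] [Fintype Y]
    (n : X → ℝ) (m : Y → ℝ) (hn : ∀ x, 0 < n x) (hm : ∀ y, 0 < m y)
    (M : X → Y → ℝ → ℝ → ℝ) (Mx0 : X → ℝ → ℝ) (M0y : Y → ℝ → ℝ)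
    -- (i) Continuity
    (hMcont : ∀ x y, Continuous fun p : ℝ × ℝ => M x y p.1 p.2)
    (hMx0cont : ∀ x, Continuous (Mx0 x))
    (hM0ycont : ∀ y, Continuous (M0y y))
    -- (ii) Monotonicity
    (hMmono : ∀ x y (u u' v v' : ℝ), u ≤ u' → v ≤ v' → M x y u' v' ≤ M x y u v)
    (hMx0mono : ∀ x, Antitone (Mx0 x))
    (hM0ymono : ∀ y, Antitone (M0y y))
    -- (iii) Limits
    (hMtop1 : ∀ x y v, Tendsto (fun u => M x y u v) atTop (𝓝 0))
    (hMbot1 : ∀ x y v, Tendsto (fun u => M x y u v) atBot atTop)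
    (hMtop2 : ∀ x y u, Tendsto (fun v => M x y u v) atTop (𝓝 0))
    (hMbot2 : ∀ x y u, Tendsto (fun v => M x y u v) atBot atTop)
    (hMx0top : ∀ x, Tendsto (Mx0 x) atTop (𝓝 0))
    (hMx0bot : ∀ x, Tendsto (Mx0 x) atBot atTop)
    (hM0ytop : ∀ y, Tendsto (M0y y) atTop (𝓝 0))
    (hM0ybot : ∀ y, Tendsto (M0y y) atBot atTop)
    -- continuous differentiability
    (hMC1 : ∀ x y, ContDiff ℝ 1 fun p : ℝ × ℝ => M x y p.1 p.2)
    (hMx0C1 : ∀ x, ContDiff ℝ 1 (Mx0 x))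
    (hM0yC1 : ∀ y, ContDiff ℝ 1 (M0y y))
    -- strict monotonicity of the singles terms
    (hMx0strict : ∀ x, StrictAnti (Mx0 x))
    (hM0ystrict : ∀ y, StrictAnti (M0y y))
    -- two solutions of the system
    (u u' : X → ℝ) (v v' : Y → ℝ)
    (hu : ∀ x, Mx0 x (u x) + ∑ y, M x y (u x) (v y) = n x)
    (hv : ∀ y, M0y y (v y) + ∑ x, M x y (u x) (v y) = m y)
    (hu' : ∀ x, Mx0 x (u' x) + ∑ y, M x y (u' x) (v' y) = n x)
    (hv' : ∀ y, M0y y (v' y) + ∑ x, M x y (u' x) (v' y) = m y) :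
    u = u' ∧ v = v' :=
  bernstein_schrodinger_uniqueness_general n m M Mx0 M0y hMmono hMx0strict hM0ystrict u u' v v' hu
    hv hu' hv'
end

section
/- Suppose the maps M_{xy}, M_{x0}, M_{0y} satisfy conditions (i) Continuity, (ii) Monotonicity and (iii) Limits. Then for every fixed x ∈ X, every v ∈ ℝ^Y and every n_x > 0, there exists u ∈ ℝ such that M_{x0}(u) + Σ_{y∈Y} M_{xy}(u, v_y) = n_x; moreover if M_{x0} is strictly decreasing, this u is unique. -/
/-!
The left-hand side `u ↦ M_{x0}(u) + ∑_y M_{xy}(u, v_y)` is continuous, tends to `0` at `+∞`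
and to `+∞` at `-∞` (the sum is antitone, so it is bounded below there by its value at `0`);
by the intermediate value theorem it takes the value `n_x > 0`. If `M_{x0}` is strictly
decreasing, so is the left-hand side, whence uniqueness.
-/

open Filter Topology

theorem exists_eq_of_tendsto_atBot_atTop_of_tendsto_atTop {f : ℝ → ℝ} (hf : Continuous f)
    (hbot : Tendsto f atBot atTop) {a c : ℝ} (htop : Tendsto f atTop (𝓝 a)) (hac : a < c) :
    ∃ u, f u = c := by
  obtain ⟨s, hs⟩ := (hbot.eventually_gt_atTop c).exists
  obtain ⟨t, ht⟩ := (htop.eventually (eventually_lt_nhds hac)).exists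
  exact intermediate_value_univ t s hf ⟨ht.le, hs.le⟩

theorem antitone_finset_sum {ι α β : Type*} [Preorder α] [AddCommMonoid β] [PartialOrder β]
    [IsOrderedAddMonoid β] {h : ι → α → β} (s : Finset ι) (hh : ∀ i ∈ s, Antitone (h i)) :
    Antitone fun u => ∑ i ∈ s, h i u :=
  fun _ _ huv => Finset.sum_le_sum fun i hi => hh i hi huv

theorem tendsto_atBot_add_sum_of_antitone {ι : Type*} [Fintype ι] {g : ℝ → ℝ} {h : ι → ℝ → ℝ}
    (hg : Tendsto g atBot atTop) (hh : ∀ i, Antitone (h i)) :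
    Tendsto (fun u => g u + ∑ i, h i u) atBot atTop :=
  tendsto_atTop_add_right_of_le' _ (∑ i, h i 0) hg <| by
    filter_upwards [eventually_le_atBot 0] with u hu
      using antitone_finset_sum _ (fun i _ => hh i) hu

theorem bernstein_schrodinger_single_equation_general
    {X Y : Type*} [Fintype Y]
    (n : X → ℝ) (hn : ∀ x, 0 < n x)
    (M : X → Y → ℝ → ℝ → ℝ) (Mx0 : X → ℝ → ℝ)
    -- (i) Continuity
    (hMcont : ∀ x y, Continuous fun p : ℝ × ℝ => M x y p.1 p.2)
    (hMx0cont : ∀ x, Continuous (Mx0 x))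
    -- (ii) Monotonicity
    (hMmono : ∀ x y (u u' v v' : ℝ), u ≤ u' → v ≤ v' → M x y u' v' ≤ M x y u v)
    -- (iii) Limits
    (hMtop1 : ∀ x y v, Tendsto (fun u => M x y u v) atTop (𝓝 0))
    (hMx0top : ∀ x, Tendsto (Mx0 x) atTop (𝓝 0))
    (hMx0bot : ∀ x, Tendsto (Mx0 x) atBot atTop)
    (x : X) (v : Y → ℝ) :
    (∃ u : ℝ, Mx0 x u + ∑ y, M x y u (v y) = n x) ∧
      (StrictAnti (Mx0 x) → ∃! u : ℝ, Mx0 x u + ∑ y, M x y u (v y) = n x) := by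
  have hanti : ∀ y, Antitone fun u => M x y u (v y) :=
    fun y _ _ huv => hMmono x y _ _ _ _ huv le_rfl
  have hcont : Continuous fun u => Mx0 x u + ∑ y, M x y u (v y) :=
    (hMx0cont x).add <| continuous_finsetSum _ fun y _ =>
      (hMcont x y).comp (continuous_id.prodMk continuous_const)
  have htop : Tendsto (fun u => Mx0 x u + ∑ y, M x y u (v y)) atTop (𝓝 0) := by
    simpa using (hMx0top x).add (tendsto_finsetSum _ fun y _ => hMtop1 x y (v y))
  obtain ⟨u, hu⟩ := exists_eq_of_tendsto_atBot_atTop_of_tendsto_atTop hcont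
    (tendsto_atBot_add_sum_of_antitone (hMx0bot x) hanti) htop (hn x)
  refine ⟨⟨u, hu⟩, fun hstrict => ⟨u, hu, fun w hw => ?_⟩⟩
  exact (hstrict.add_antitone (antitone_finset_sum _ fun y _ => hanti y)).injective
    (hw.trans hu.symm)

/-- For fixed `x`, fixed `v : Y → ℝ` and `n x > 0`, the single equation
`M_{x0}(u) + ∑_y M_{xy}(u, v_y) = n_x` has a solution `u`, which is unique
when `M_{x0}` is strictly decreasing. -/
theorem bernstein_schrodinger_single_equation
    {X Y : Type*} [Fintype X] [Fintype Y]
    (n : X → ℝ) (m : Y → ℝ) (hn : ∀ x, 0 < n x) (hm : ∀ y, 0 < m y)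
    (M : X → Y → ℝ → ℝ → ℝ) (Mx0 : X → ℝ → ℝ) (M0y : Y → ℝ → ℝ)
    -- (i) Continuity
    (hMcont : ∀ x y, Continuous fun p : ℝ × ℝ => M x y p.1 p.2)
    (hMx0cont : ∀ x, Continuous (Mx0 x))
    (hM0ycont : ∀ y, Continuous (M0y y))
    -- (ii) Monotonicity
    (hMmono : ∀ x y (u u' v v' : ℝ), u ≤ u' → v ≤ v' → M x y u' v' ≤ M x y u v)
    (hMx0mono : ∀ x, Antitone (Mx0 x))
    (hM0ymono : ∀ y, Antitone (M0y y))
    -- (iii) Limits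
    (hMtop1 : ∀ x y v, Tendsto (fun u => M x y u v) atTop (𝓝 0))
    (hMbot1 : ∀ x y v, Tendsto (fun u => M x y u v) atBot atTop)
    (hMtop2 : ∀ x y u, Tendsto (fun v => M x y u v) atTop (𝓝 0))
    (hMbot2 : ∀ x y u, Tendsto (fun v => M x y u v) atBot atTop)
    (hMx0top : ∀ x, Tendsto (Mx0 x) atTop (𝓝 0))
    (hMx0bot : ∀ x, Tendsto (Mx0 x) atBot atTop)
    (hM0ytop : ∀ y, Tendsto (M0y y) atTop (𝓝 0))
    (hM0ybot : ∀ y, Tendsto (M0y y) atBot atTop)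
    (x : X) (v : Y → ℝ) :
    (∃ u : ℝ, Mx0 x u + ∑ y, M x y u (v y) = n x) ∧
      (StrictAnti (Mx0 x) → ∃! u : ℝ, Mx0 x u + ∑ y, M x y u (v y) = n x) :=
  bernstein_schrodinger_single_equation_general n hn M Mx0 hMcont hMx0cont hMmono hMtop1 hMx0top
    hMx0bot x v
end

section
/- Suppose the maps M_{xy}, M_{x0}, M_{0y} satisfy conditions (i) Continuity, (ii) Monotonicity and (iii) Limits, with M_{x0} and M_{0y} strictly decreasing. Define F : ℝ^Y → ℝ^X by letting F_x(v) be the unique u with M_{x0}(u) + Σ_{y∈Y} M_{xy}(u, v_y) = n_x, and G : ℝ^X → ℝ^Y by letting G_y(u) be the unique v with M_{0y}(v) + Σ_{x∈X} M_{xy}(u_x, v) = m_y. Then F and G are anti-isotone: v ≤ v' componentwise implies F_x(v') ≤ F_x(v) for all x, and u ≤ u' componentwise implies G_y(u') ≤ G_y(u) for all y; consequently the composition G ∘ F is isotone. -/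
open Filter Topology

theorem StrictAnti.le_of_add_sum_eq {α γ β ι : Type*} [LinearOrder α] [Preorder γ]
    [AddCommMonoid β] [PartialOrder β] [IsOrderedCancelAddMonoid β] [Fintype ι]
    {φ : α → β} (hφ : StrictAnti φ) {ψ : ι → α → γ → β}
    (hψ : ∀ i u u' v v', u ≤ u' → v ≤ v' → ψ i u' v' ≤ ψ i u v)
    {u u' : α} {v v' : ι → γ} (hv : v ≤ v')
    (h : φ u + ∑ i, ψ i u (v i) = φ u' + ∑ i, ψ i u' (v' i)) : u' ≤ u := by
  by_contra! hu
  have hsum : ∑ i, ψ i u' (v' i) ≤ ∑ i, ψ i u (v i) :=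
    Finset.sum_le_sum fun i _ => hψ i _ _ _ _ hu.le (hv i)
  exact (add_lt_add_of_lt_of_le (hφ hu) hsum).ne h.symm

theorem bernstein_schrodinger_updates_anti_isotone_general
    {X Y : Type*} [Fintype X] [Fintype Y]
    (n : X → ℝ) (m : Y → ℝ)
    (M : X → Y → ℝ → ℝ → ℝ) (Mx0 : X → ℝ → ℝ) (M0y : Y → ℝ → ℝ)
    -- (ii) Monotonicity
    (hMmono : ∀ x y (u u' v v' : ℝ), u ≤ u' → v ≤ v' → M x y u' v' ≤ M x y u v)
    -- strict monotonicity of the singles terms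
    (hMx0strict : ∀ x, StrictAnti (Mx0 x))
    (hM0ystrict : ∀ y, StrictAnti (M0y y))
    -- the update maps F and G, characterized by their defining equations
    (F : (Y → ℝ) → (X → ℝ)) (G : (X → ℝ) → (Y → ℝ))
    (hF : ∀ (v : Y → ℝ) (x : X), Mx0 x (F v x) + ∑ y, M x y (F v x) (v y) = n x)
    (hG : ∀ (u : X → ℝ) (y : Y), M0y y (G u y) + ∑ x, M x y (u x) (G u y) = m y) :
    (∀ v v' : Y → ℝ, v ≤ v' → F v' ≤ F v) ∧
    (∀ u u' : X → ℝ, u ≤ u' → G u' ≤ G u) ∧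
    Monotone (G ∘ F) := by
  have hF_anti : Antitone F := fun v v' hv x =>
    (hMx0strict x).le_of_add_sum_eq (hMmono x) hv ((hF v x).trans (hF v' x).symm)
  have hG_anti : Antitone G := fun u u' hu y =>
    (hM0ystrict y).le_of_add_sum_eq (fun x _ _ _ _ hv hu => hMmono x y _ _ _ _ hu hv) hu
      ((hG u y).trans (hG u' y).symm)
  exact ⟨hF_anti, hG_anti, hG_anti.comp hF_anti⟩

/-- The coordinate update maps `F` and `G` of the iterative fitting procedure are
anti-isotone, and hence the composition `G ∘ F` is isotone. -/
theorem bernstein_schrodinger_updates_anti_isotone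
    {X Y : Type*} [Fintype X] [Fintype Y]
    (n : X → ℝ) (m : Y → ℝ) (hn : ∀ x, 0 < n x) (hm : ∀ y, 0 < m y)
    (M : X → Y → ℝ → ℝ → ℝ) (Mx0 : X → ℝ → ℝ) (M0y : Y → ℝ → ℝ)
    -- (i) Continuity
    (hMcont : ∀ x y, Continuous fun p : ℝ × ℝ => M x y p.1 p.2)
    (hMx0cont : ∀ x, Continuous (Mx0 x))
    (hM0ycont : ∀ y, Continuous (M0y y))
    -- (ii) Monotonicity
    (hMmono : ∀ x y (u u' v v' : ℝ), u ≤ u' → v ≤ v' → M x y u' v' ≤ M x y u v)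
    (hMx0mono : ∀ x, Antitone (Mx0 x))
    (hM0ymono : ∀ y, Antitone (M0y y))
    -- (iii) Limits
    (hMtop1 : ∀ x y v, Tendsto (fun u => M x y u v) atTop (𝓝 0))
    (hMbot1 : ∀ x y v, Tendsto (fun u => M x y u v) atBot atTop)
    (hMtop2 : ∀ x y u, Tendsto (fun v => M x y u v) atTop (𝓝 0))
    (hMbot2 : ∀ x y u, Tendsto (fun v => M x y u v) atBot atTop)
    (hMx0top : ∀ x, Tendsto (Mx0 x) atTop (𝓝 0))
    (hMx0bot : ∀ x, Tendsto (Mx0 x) atBot atTop)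
    (hM0ytop : ∀ y, Tendsto (M0y y) atTop (𝓝 0))
    (hM0ybot : ∀ y, Tendsto (M0y y) atBot atTop)
    -- strict monotonicity of the singles terms
    (hMx0strict : ∀ x, StrictAnti (Mx0 x))
    (hM0ystrict : ∀ y, StrictAnti (M0y y))
    -- the update maps F and G, characterized by their defining equations
    (F : (Y → ℝ) → (X → ℝ)) (G : (X → ℝ) → (Y → ℝ))
    (hF : ∀ (v : Y → ℝ) (x : X), Mx0 x (F v x) + ∑ y, M x y (F v x) (v y) = n x)
    (hG : ∀ (u : X → ℝ) (y : Y), M0y y (G u y) + ∑ x, M x y (u x) (G u y) = m y) :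
    (∀ v v' : Y → ℝ, v ≤ v' → F v' ≤ F v) ∧
    (∀ u u' : X → ℝ, u ≤ u' → G u' ≤ G u) ∧
    Monotone (G ∘ F) :=
  bernstein_schrodinger_updates_anti_isotone_general n m M Mx0 M0y hMmono hMx0strict hM0ystrict F G
    hF hG
end

section
/- Suppose the maps M_{xy}, M_{x0}, M_{0y} satisfy conditions (i) Continuity, (ii) Monotonicity and (iii) Limits, with M_{x0} and M_{0y} strictly decreasing. Define the iterates of the iterative fitting algorithm: u^1 ∈ ℝ^X is given by M_{x0}(u^1_x) = n_x; for t ≥ 1, v^{t} ∈ ℝ^Y is the unique solution of M_{0y}(v^{t}_y) + Σ_{x∈X} M_{xy}(u^{t}_x, v^{t}_y) = m_y for each y, and u^{t+1} ∈ ℝ^X is the unique solution of M_{x0}(u^{t+1}_x) + Σ_{y∈Y} M_{xy}(u^{t+1}_x, v^{t}_y) = n_x for each x. Then the sequence (v^t) is componentwise nonincreasing and bounded below, the sequence (u^t) is componentwise nondecreasing, both sequences converge, and their limits (ū, v̄) solve the nonlinear Bernstein–Schrödinger system. -/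
/-!
The `t`-th iterate solves each `y`-equation with `u^t` frozen and each `x`-equation with `v^t`
frozen. Each equation has the form `N₀(a) + ∑ N(a, w) = c` with a strictly decreasing left-hand
side in `a` that also decreases in the frozen variables `w`, so raising `w` moves the root `a`
down. Since `u^1 ≤ u^2` (the sum over `Y` is nonnegative), this makes `v^t` decrease and `u^t`
increase, alternately, by induction. The `y`-equations bound `v^t` below through `M_{0y} → ∞`
at `-∞`; with `v^t ≥ B`, the `x`-equations bound `u^t` above because the left-hand side at
`v ≡ B` tends to `0 < n_x`. Monotone bounded sequences converge, and by continuity the limits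
solve the system.
-/

open Filter Topology

section Margin

variable {κ : Type*} [Fintype κ] {N₀ : ℝ → ℝ} {N : κ → ℝ → ℝ → ℝ}

variable (N₀ N) in
def margin (a : ℝ) (w : κ → ℝ) : ℝ :=
  N₀ a + ∑ j, N j a (w j)

theorem margin_strictAnti (hN₀ : StrictAnti N₀) (hN : ∀ j b, Antitone fun a => N j a b)
    (w : κ → ℝ) : StrictAnti fun a => margin N₀ N a w :=
  hN₀.add_antitone fun _ _ hab => Finset.sum_le_sum fun j _ => hN j (w j) hab

theorem margin_antitone_right (hN : ∀ j a, Antitone (N j a)) (a : ℝ) :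
    Antitone (margin N₀ N a) :=
  fun _ _ hw => add_le_add le_rfl (Finset.sum_le_sum fun j _ => hN j a (hw j))

theorem le_margin (hN : ∀ j a b, 0 ≤ N j a b) (a : ℝ) (w : κ → ℝ) : N₀ a ≤ margin N₀ N a w :=
  le_add_of_nonneg_right (Finset.sum_nonneg fun j _ => hN j a (w j))

theorem le_of_margin_eq_of_le (hN₀ : StrictAnti N₀) (hN₁ : ∀ j b, Antitone fun a => N j a b)
    (hN₂ : ∀ j a, Antitone (N j a)) {a a' c : ℝ} {w w' : κ → ℝ}
    (ha : margin N₀ N a w = c) (ha' : margin N₀ N a' w' = c) (hw : w ≤ w') : a' ≤ a :=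
  (margin_strictAnti hN₀ hN₁ w').le_iff_ge.1 <|
    calc margin N₀ N a w' ≤ margin N₀ N a w := margin_antitone_right hN₂ a hw
      _ = margin N₀ N a' w' := ha.trans ha'.symm

theorem exists_le_of_margin_eq (hN : ∀ j a b, 0 ≤ N j a b) (hN₀ : Tendsto N₀ atBot atTop)
    (c : ℝ) : ∃ b, ∀ a w, margin N₀ N a w = c → b ≤ a := by
  obtain ⟨b, hb⟩ := eventually_atBot.1 (hN₀.eventually_gt_atTop c)
  refine ⟨b, fun a w h => le_of_not_gt fun hab => ?_⟩
  exact (hb a hab.le).not_ge (h ▸ le_margin hN a w)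

theorem exists_ge_of_margin_eq (hN : ∀ j a, Antitone (N j a)) (hN₀ : Tendsto N₀ atTop (𝓝 0))
    (hN_top : ∀ j b, Tendsto (fun a => N j a b) atTop (𝓝 0)) {c : ℝ} (hc : 0 < c) (B : ℝ) :
    ∃ C, ∀ a w, (∀ j, B ≤ w j) → margin N₀ N a w = c → a ≤ C := by
  have hlim : Tendsto (fun a => margin N₀ N a fun _ => B) atTop (𝓝 0) := by
    simpa [margin] using hN₀.add (tendsto_finsetSum Finset.univ fun j _ => hN_top j B)
  obtain ⟨C, hC⟩ := eventually_atTop.1 (hlim.eventually_lt_const hc)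
  refine ⟨C, fun a w hw h => le_of_not_gt fun hCa => ?_⟩
  exact (hC a hCa.le).not_ge (h ▸ margin_antitone_right hN a hw)

theorem margin_eq_of_tendsto {α : Type*} {l : Filter α} [l.NeBot] (hN₀ : Continuous N₀)
    (hN : ∀ j, Continuous fun p : ℝ × ℝ => N j p.1 p.2) {a : α → ℝ} {w : α → κ → ℝ}
    {a₀ c : ℝ} {w₀ : κ → ℝ} (ha : Tendsto a l (𝓝 a₀))
    (hw : ∀ j, Tendsto (fun t => w t j) l (𝓝 (w₀ j)))
    (heq : ∀ᶠ t in l, margin N₀ N (a t) (w t) = c) : margin N₀ N a₀ w₀ = c := by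
  have hlim : Tendsto (fun t => margin N₀ N (a t) (w t)) l (𝓝 (margin N₀ N a₀ w₀)) :=
    ((hN₀.tendsto a₀).comp ha).add <|
      tendsto_finsetSum _ fun j _ => ((hN j).tendsto _).comp (ha.prodMk_nhds (hw j))
  exact tendsto_nhds_unique hlim (tendsto_const_nhds.congr' (heq.mono fun _ h => h.symm))

end Margin

section MonotoneConvergence

variable {α : Type*} [ConditionallyCompleteLinearOrder α] [TopologicalSpace α] [OrderTopology α]
  {f : ℕ → α}

theorem exists_tendsto_of_eventually_le_succ {C : α} (hf : ∀ᶠ t in atTop, f t ≤ f (t + 1))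
    (hC : ∀ᶠ t in atTop, f t ≤ C) : ∃ L, Tendsto f atTop (𝓝 L) := by
  obtain ⟨k, hk⟩ := eventually_atTop.1 (hf.and hC)
  have hmono : Monotone fun t => f (t + k) :=
    monotone_nat_of_le_succ fun t => by simpa [add_right_comm] using (hk (t + k) le_add_self).1
  have hbdd : BddAbove (Set.range fun t => f (t + k)) :=
    ⟨C, Set.forall_mem_range.2 fun t => (hk (t + k) le_add_self).2⟩
  exact ⟨_, (tendsto_add_atTop_iff_nat k).1 (tendsto_atTop_ciSup hmono hbdd)⟩

theorem exists_tendsto_of_eventually_succ_le {B : α} (hf : ∀ᶠ t in atTop, f (t + 1) ≤ f t)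
    (hB : ∀ᶠ t in atTop, B ≤ f t) : ∃ L, Tendsto f atTop (𝓝 L) :=
  exists_tendsto_of_eventually_le_succ (α := αᵒᵈ) hf hB

end MonotoneConvergence

theorem alternating_margin_roots_monotone {X Y : Type*} [Fintype X] [Fintype Y] {n : X → ℝ} {m : Y → ℝ}
    {M : X → Y → ℝ → ℝ → ℝ} {Mx0 : X → ℝ → ℝ} {M0y : Y → ℝ → ℝ}
    (hMx0 : ∀ x, StrictAnti (Mx0 x)) (hM0y : ∀ y, StrictAnti (M0y y))
    (hM₁ : ∀ x y b, Antitone fun a => M x y a b) (hM₂ : ∀ x y a, Antitone (M x y a))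
    (hM₀ : ∀ x y a b, 0 ≤ M x y a b) {u : ℕ → X → ℝ} {v : ℕ → Y → ℝ}
    (hinit : ∀ x, Mx0 x (u 1 x) = n x)
    (hrow : ∀ t, 1 ≤ t → ∀ x, margin (Mx0 x) (M x) (u (t + 1) x) (v t) = n x)
    (hcol : ∀ t, 1 ≤ t → ∀ y, margin (M0y y) (fun x b a => M x y a b) (v t y) (u t) = m y)
    (t : ℕ) (ht : 1 ≤ t) : u t ≤ u (t + 1) ∧ v (t + 1) ≤ v t := by
  have hvstep : ∀ t, 1 ≤ t → u t ≤ u (t + 1) → v (t + 1) ≤ v t := fun t ht hut y =>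
    le_of_margin_eq_of_le (hM0y y) (fun x => hM₂ x y) (fun x => hM₁ x y)
      (hcol t ht y) (hcol (t + 1) (by omega) y) hut
  suffices u t ≤ u (t + 1) from ⟨this, hvstep t ht this⟩
  induction t, ht using Nat.le_induction with
  | base =>
    exact fun x => (hMx0 x).le_iff_ge.1 <|
      (le_margin (hM₀ x) _ _).trans_eq ((hrow 1 le_rfl x).trans (hinit x).symm)
  | succ t ht ih =>
    exact fun x => le_of_margin_eq_of_le (hMx0 x) (hM₁ x) (hM₂ x)
      (hrow (t + 1) (by omega) x) (hrow t ht x) (hvstep t ht ih)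

theorem bernstein_schrodinger_algorithm_converges_general
    {X Y : Type*} [Fintype X] [Fintype Y]
    (n : X → ℝ) (m : Y → ℝ) (hn : ∀ x, 0 < n x)
    (M : X → Y → ℝ → ℝ → ℝ) (Mx0 : X → ℝ → ℝ) (M0y : Y → ℝ → ℝ)
    -- (i) Continuity
    (hMcont : ∀ x y, Continuous fun p : ℝ × ℝ => M x y p.1 p.2)
    (hMx0cont : ∀ x, Continuous (Mx0 x))
    (hM0ycont : ∀ y, Continuous (M0y y))
    -- (ii) Monotonicity
    (hMmono : ∀ x y (u u' v v' : ℝ), u ≤ u' → v ≤ v' → M x y u' v' ≤ M x y u v)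
    -- (iii) Limits
    (hMtop1 : ∀ x y v, Tendsto (fun u => M x y u v) atTop (𝓝 0))
    (hMx0top : ∀ x, Tendsto (Mx0 x) atTop (𝓝 0))
    (hM0ybot : ∀ y, Tendsto (M0y y) atBot atTop)
    -- strict monotonicity of the singles terms
    (hMx0strict : ∀ x, StrictAnti (Mx0 x))
    (hM0ystrict : ∀ y, StrictAnti (M0y y))
    -- the iterates of the algorithm (indexed from t = 1)
    (u : ℕ → X → ℝ) (v : ℕ → Y → ℝ)
    (hinit : ∀ x, Mx0 x (u 1 x) = n x)
    (hv : ∀ t, 1 ≤ t → ∀ y, M0y y (v t y) + ∑ x, M x y (u t x) (v t y) = m y)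
    (hu : ∀ t, 1 ≤ t → ∀ x, Mx0 x (u (t + 1) x) + ∑ y, M x y (u (t + 1) x) (v t y) = n x) :
    (∀ t, 1 ≤ t → ∀ y, v (t + 1) y ≤ v t y) ∧
    (∃ B : ℝ, ∀ t, 1 ≤ t → ∀ y, B ≤ v t y) ∧
    (∀ t, 1 ≤ t → ∀ x, u t x ≤ u (t + 1) x) ∧
    (∃ (ubar : X → ℝ) (vbar : Y → ℝ),
      (∀ x, Tendsto (fun t => u t x) atTop (𝓝 (ubar x))) ∧
      (∀ y, Tendsto (fun t => v t y) atTop (𝓝 (vbar y))) ∧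
      (∀ x, Mx0 x (ubar x) + ∑ y, M x y (ubar x) (vbar y) = n x) ∧
      (∀ y, M0y y (vbar y) + ∑ x, M x y (ubar x) (vbar y) = m y)) := by
  have hM₁ : ∀ x y b, Antitone fun a => M x y a b := fun x y b _ _ h => hMmono x y _ _ b b h le_rfl
  have hM₂ : ∀ x y a, Antitone (M x y a) := fun x y a _ _ h => hMmono x y a a _ _ le_rfl h
  have hM₀ : ∀ x y a b, 0 ≤ M x y a b := fun x y a b => (hM₁ x y b).le_of_tendsto (hMtop1 x y b) a
  have hrow : ∀ t, 1 ≤ t → ∀ x, margin (Mx0 x) (M x) (u (t + 1) x) (v t) = n x := hu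
  have hcol : ∀ t, 1 ≤ t → ∀ y, margin (M0y y) (fun x b a => M x y a b) (v t y) (u t) = m y := hv
  have hmono : ∀ t, 1 ≤ t → u t ≤ u (t + 1) ∧ v (t + 1) ≤ v t :=
    alternating_margin_roots_monotone hMx0strict hM0ystrict hM₁ hM₂ hM₀ hinit hrow hcol
  choose b hb using fun y => exists_le_of_margin_eq (N := fun x b a => M x y a b)
    (fun x b a => hM₀ x y a b) (hM0ybot y) (m y)
  obtain ⟨B, hB⟩ := Finite.bddBelow_range b
  have hvB : ∀ t, 1 ≤ t → ∀ y, B ≤ v t y := fun t ht y =>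
    (hB ⟨y, rfl⟩).trans (hb y _ _ (hcol t ht y))
  choose C hC using fun x => exists_ge_of_margin_eq (hM₂ x) (hMx0top x) (hMtop1 x) (hn x) B
  choose ubar hulim using fun x => exists_tendsto_of_eventually_le_succ (C := C x)
    ((eventually_ge_atTop 1).mono fun t ht => (hmono t ht).1 x)
    ((eventually_ge_atTop 1).mono fun t ht =>
      ((hmono t ht).1 x).trans (hC x _ _ (hvB t ht) (hrow t ht x)))
  choose vbar hvlim using fun y => exists_tendsto_of_eventually_succ_le
    ((eventually_ge_atTop 1).mono fun t ht => (hmono t ht).2 y)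
    ((eventually_ge_atTop 1).mono fun t ht => hvB t ht y)
  refine ⟨fun t ht => (hmono t ht).2, ⟨B, hvB⟩, fun t ht => (hmono t ht).1,
    ubar, vbar, hulim, hvlim, fun x => ?_, fun y => ?_⟩
  · exact margin_eq_of_tendsto (hMx0cont x) (hMcont x) ((hulim x).comp (tendsto_add_atTop_nat 1))
      hvlim ((eventually_ge_atTop 1).mono fun t ht => hrow t ht x)
  · exact margin_eq_of_tendsto (N := fun x b a => M x y a b) (hM0ycont y)
      (fun x => (hMcont x y).comp continuous_swap)
      (hvlim y) hulim ((eventually_ge_atTop 1).mono fun t ht => hcol t ht y)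

/-- Monotone convergence of the iterative fitting algorithm: the iterates `v^t` are
componentwise nonincreasing and bounded below, the iterates `u^t` are componentwise
nondecreasing, both converge, and their limits solve the nonlinear
Bernstein–Schrödinger system. -/
theorem bernstein_schrodinger_algorithm_converges
    {X Y : Type*} [Fintype X] [Fintype Y]
    (n : X → ℝ) (m : Y → ℝ) (hn : ∀ x, 0 < n x) (hm : ∀ y, 0 < m y)
    (M : X → Y → ℝ → ℝ → ℝ) (Mx0 : X → ℝ → ℝ) (M0y : Y → ℝ → ℝ)
    -- (i) Continuity
    (hMcont : ∀ x y, Continuous fun p : ℝ × ℝ => M x y p.1 p.2)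
    (hMx0cont : ∀ x, Continuous (Mx0 x))
    (hM0ycont : ∀ y, Continuous (M0y y))
    -- (ii) Monotonicity
    (hMmono : ∀ x y (u u' v v' : ℝ), u ≤ u' → v ≤ v' → M x y u' v' ≤ M x y u v)
    (hMx0mono : ∀ x, Antitone (Mx0 x))
    (hM0ymono : ∀ y, Antitone (M0y y))
    -- (iii) Limits
    (hMtop1 : ∀ x y v, Tendsto (fun u => M x y u v) atTop (𝓝 0))
    (hMbot1 : ∀ x y v, Tendsto (fun u => M x y u v) atBot atTop)
    (hMtop2 : ∀ x y u, Tendsto (fun v => M x y u v) atTop (𝓝 0))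
    (hMbot2 : ∀ x y u, Tendsto (fun v => M x y u v) atBot atTop)
    (hMx0top : ∀ x, Tendsto (Mx0 x) atTop (𝓝 0))
    (hMx0bot : ∀ x, Tendsto (Mx0 x) atBot atTop)
    (hM0ytop : ∀ y, Tendsto (M0y y) atTop (𝓝 0))
    (hM0ybot : ∀ y, Tendsto (M0y y) atBot atTop)
    -- strict monotonicity of the singles terms
    (hMx0strict : ∀ x, StrictAnti (Mx0 x))
    (hM0ystrict : ∀ y, StrictAnti (M0y y))
    -- the iterates of the algorithm (indexed from t = 1)
    (u : ℕ → X → ℝ) (v : ℕ → Y → ℝ)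
    (hinit : ∀ x, Mx0 x (u 1 x) = n x)
    (hv : ∀ t, 1 ≤ t → ∀ y, M0y y (v t y) + ∑ x, M x y (u t x) (v t y) = m y)
    (hu : ∀ t, 1 ≤ t → ∀ x, Mx0 x (u (t + 1) x) + ∑ y, M x y (u (t + 1) x) (v t y) = n x) :
    (∀ t, 1 ≤ t → ∀ y, v (t + 1) y ≤ v t y) ∧
    (∃ B : ℝ, ∀ t, 1 ≤ t → ∀ y, B ≤ v t y) ∧
    (∀ t, 1 ≤ t → ∀ x, u t x ≤ u (t + 1) x) ∧
    (∃ (ubar : X → ℝ) (vbar : Y → ℝ),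
      (∀ x, Tendsto (fun t => u t x) atTop (𝓝 (ubar x))) ∧
      (∀ y, Tendsto (fun t => v t y) atTop (𝓝 (vbar y))) ∧
      (∀ x, Mx0 x (ubar x) + ∑ y, M x y (ubar x) (vbar y) = n x) ∧
      (∀ y, M0y y (vbar y) + ∑ x, M x y (ubar x) (vbar y) = m y)) :=
  bernstein_schrodinger_algorithm_converges_general n m hn M Mx0 M0y hMcont hMx0cont hM0ycont hMmono
    hMtop1 hMx0top hM0ybot hMx0strict hM0ystrict u v hinit hv hu
end

section
/- Suppose each Ψ_{ij} satisfies conditions (a), (b), (c) and (d). Then for all sufficiently small T > 0 there exist u ∈ ℝ^I and v ∈ ℝ^J with u_i ≥ 0 and v_j ≥ 0 for all i, j, such that exp(−u_i/T) + Σ_{j∈J} exp(−Ψ_{ij}(u_i, v_j)/T) = 1 for every i ∈ I, and exp(−v_j/T) + Σ_{i∈I} exp(−Ψ_{ij}(u_i, v_j)/T) = 1 for every j ∈ J. -/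
open Filter Topology Set

/-!
Monotonicity and condition (c) give `ε > 0` such that `Ψ ≥ ε` as soon as one argument is
large and the other nonnegative. Once `T < ε / (|I| + |J| + 1)`, the mass `|I| e^{-ε/T}`
contributed by the other side is below `1`, so each equation, read as an equation in its own
unknown only, has a root in a fixed interval `[0, M]` (intermediate value theorem). By strict
monotonicity these roots depend antitonically on the other side's payoffs, so "solve for `u`
given `v`, then for `v` given `u`" is a monotone self-map of the box `[0, M]^J`, and Tarski's
fixed point theorem produces a solution.
-/

theorem MonotoneOn.exists_isFixedPt_of_mapsTo_Icc {α : Type*} [ConditionallyCompleteLattice α]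
    {f : α → α} {a b : α} (hab : a ≤ b) (hf : MonotoneOn f (Icc a b))
    (hmaps : MapsTo f (Icc a b) (Icc a b)) : ∃ x ∈ Icc a b, Function.IsFixedPt f x := by
  have : Fact (a ≤ b) := ⟨hab⟩
  let g : Icc a b →o Icc a b := ⟨hmaps.restrict f _ _, fun x y h => hf x.2 y.2 h⟩
  exact ⟨g.lfp, g.lfp.2, congrArg Subtype.val g.isFixedPt_lfp⟩

section GibbsWeight

variable {K : Type*} [Fintype K] {T : ℝ} {g g' : K → ℝ → ℝ}

/-- The left-hand side of one equation of the regularized system, as a function of its own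
unknown `x`; `g k x` is the coupling `Ψ` with the `k`-th agent of the other side. -/
noncomputable def gibbsWeight (T : ℝ) (g : K → ℝ → ℝ) (x : ℝ) : ℝ :=
  Real.exp (-x / T) + ∑ k, Real.exp (-g k x / T)

theorem gibbsWeight_strictAnti (hT : 0 < T) (hg : ∀ k, Monotone (g k)) :
    StrictAnti (gibbsWeight T g) := fun x y hxy => by
  unfold gibbsWeight
  refine add_lt_add_of_lt_of_le (by gcongr) (Finset.sum_le_sum fun k _ => ?_)
  gcongr
  exact hg k hxy.le

theorem continuous_gibbsWeight (hg : ∀ k, Continuous (g k)) : Continuous (gibbsWeight T g) := by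
  unfold gibbsWeight
  fun_prop

theorem one_le_gibbsWeight_zero : 1 ≤ gibbsWeight T g 0 := by
  simp only [gibbsWeight, neg_zero, zero_div, Real.exp_zero, le_add_iff_nonneg_right]
  positivity

theorem gibbsWeight_le_of_le (hT : 0 < T) (hgg' : ∀ k y, g k y ≤ g' k y) (x : ℝ) :
    gibbsWeight T g' x ≤ gibbsWeight T g x := by
  unfold gibbsWeight
  gcongr with k
  exact hgg' k x

theorem gibbsWeight_lt_one {ε M : ℝ} {N : ℕ} (hT : 0 < T) (hε : ∀ k, ε ≤ g k M)
    (hN : Fintype.card K ≤ N) (h : Real.exp (-M / T) + N * Real.exp (-ε / T) < 1) :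
    gibbsWeight T g M < 1 := by
  refine lt_of_le_of_lt (add_le_add_right ?_ _) h
  calc ∑ k, Real.exp (-g k M / T) ≤ ∑ _k : K, Real.exp (-ε / T) :=
        Finset.sum_le_sum fun k _ => by gcongr; exact hε k
    _ = Fintype.card K * Real.exp (-ε / T) := by simp
    _ ≤ N * Real.exp (-ε / T) := by gcongr

theorem exists_gibbsWeight_eq_one {ε M : ℝ} {N : ℕ} (hT : 0 < T) (hM : 0 ≤ M)
    (hg : ∀ k, Continuous (g k)) (hε : ∀ k, ε ≤ g k M) (hN : Fintype.card K ≤ N)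
    (h : Real.exp (-M / T) + N * Real.exp (-ε / T) < 1) :
    ∃ x ∈ Icc 0 M, gibbsWeight T g x = 1 :=
  intermediate_value_Icc' hM (continuous_gibbsWeight hg).continuousOn
    ⟨(gibbsWeight_lt_one hT hε hN h).le, one_le_gibbsWeight_zero⟩

theorem le_of_gibbsWeight_eq_one (hT : 0 < T) (hg' : ∀ k, Monotone (g' k))
    (hgg' : ∀ k y, g k y ≤ g' k y) {x x' : ℝ} (hx : gibbsWeight T g x = 1)
    (hx' : gibbsWeight T g' x' = 1) : x' ≤ x :=
  (gibbsWeight_strictAnti hT hg').le_iff_ge.1 <| by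
    rw [hx', ← hx]
    exact gibbsWeight_le_of_le hT hgg' x

end GibbsWeight

theorem eventually_exp_neg_div_add_mul_lt_one {ε T : ℝ} {N : ℕ} (hT : 0 < T)
    (hTε : T < ε / (N + 1)) :
    ∀ᶠ M in atTop, Real.exp (-M / T) + N * Real.exp (-ε / T) < 1 := by
  have hmass : N * Real.exp (-ε / T) < 1 := by
    have hεT : N + 1 < ε / T := by rwa [lt_div_iff₀ hT, mul_comm, ← lt_div_iff₀ (by positivity)]
    rw [neg_div, Real.exp_neg, ← div_eq_mul_inv, div_lt_one (Real.exp_pos _)]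
    linarith [Real.add_one_le_exp (ε / T)]
  have hlim : Tendsto (fun M => Real.exp (-M / T)) atTop (𝓝 0) :=
    Real.tendsto_exp_atBot.comp (tendsto_neg_atTop_atBot.atBot_div_const hT)
  filter_upwards [hlim.eventually (gt_mem_nhds (sub_pos.2 hmass))] with M hM
  linarith

theorem eventually_eventually_le_of_monotone {Ψ : ℝ → ℝ → ℝ}
    (hmono : ∀ t t' r r' : ℝ, t ≤ t' → r ≤ r' → Ψ t r ≤ Ψ t' r') {t₀ r₀ : ℝ}
    (ht₀ : 0 < Ψ t₀ 0) (hr₀ : 0 < Ψ 0 r₀) :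
    ∀ᶠ ε in 𝓝[>] 0, ∀ᶠ c in atTop, ∀ r, 0 ≤ r → ε ≤ Ψ c r ∧ ε ≤ Ψ r c := by
  filter_upwards [nhdsWithin_le_nhds (eventually_lt_nhds (lt_min ht₀ hr₀))] with ε hε
  filter_upwards [eventually_ge_atTop (max t₀ r₀)] with c hc r hr
  have := lt_min_iff.1 hε
  exact ⟨by linarith [hmono t₀ c 0 r (le_of_max_le_left hc) hr],
    by linarith [hmono 0 r r₀ c hr (le_of_max_le_right hc)]⟩

section RegularizedSystem

variable {I J : Type*} [Fintype I] [Fintype J] {Ψ : I → J → ℝ → ℝ → ℝ} {T ε M : ℝ}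

theorem exists_regularized_solution (hT : 0 < T) (hM : 0 ≤ M)
    (hcont₁ : ∀ i j r, Continuous (Ψ i j · r)) (hcont₂ : ∀ i j t, Continuous (Ψ i j t))
    (hmono : ∀ i j (t t' r r' : ℝ), t ≤ t' → r ≤ r' → Ψ i j t r ≤ Ψ i j t' r')
    (hε₁ : ∀ i j r, 0 ≤ r → ε ≤ Ψ i j M r) (hε₂ : ∀ i j t, 0 ≤ t → ε ≤ Ψ i j t M)
    {N : ℕ} (hI : Fintype.card I ≤ N) (hJ : Fintype.card J ≤ N)
    (hN : Real.exp (-M / T) + N * Real.exp (-ε / T) < 1) :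
    ∃ (u : I → ℝ) (v : J → ℝ), (∀ i, 0 ≤ u i) ∧ (∀ j, 0 ≤ v j) ∧
      (∀ i, gibbsWeight T (fun j x => Ψ i j x (v j)) (u i) = 1) ∧
      (∀ j, gibbsWeight T (fun i y => Ψ i j (u i) y) (v j) = 1) := by
  have hΨ₁ : ∀ i j r, Monotone (Ψ i j · r) := fun i j r a b h => hmono i j a b r r h le_rfl
  have hΨ₂ : ∀ i j t, Monotone (Ψ i j t) := fun i j t a b h => hmono i j t t a b le_rfl h
  choose! U hU using fun (v : J → ℝ) (hv : 0 ≤ v) (i : I) =>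
    exists_gibbsWeight_eq_one hT hM (fun j => hcont₁ i j (v j)) (fun j => hε₁ i j (v j) (hv j))
      hJ hN
  choose! V hV using fun (u : I → ℝ) (hu : 0 ≤ u) (j : J) =>
    exists_gibbsWeight_eq_one hT hM (fun i => hcont₂ i j (u i)) (fun i => hε₂ i j (u i) (hu i))
      hI hN
  have hU_mem : ∀ v, 0 ≤ v → U v ∈ Icc 0 fun _ => M := fun v hv =>
    ⟨fun i => (hU v hv i).1.1, fun i => (hU v hv i).1.2⟩
  have hV_mem : ∀ u, 0 ≤ u → V u ∈ Icc 0 fun _ => M := fun u hu =>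
    ⟨fun j => (hV u hu j).1.1, fun j => (hV u hu j).1.2⟩
  have hU_anti : ∀ v v', 0 ≤ v → v ≤ v' → U v' ≤ U v := fun v v' hv hvv' i =>
    le_of_gibbsWeight_eq_one hT (fun j => hΨ₁ i j (v' j)) (fun j x => hΨ₂ i j x (hvv' j))
      (hU v hv i).2 (hU v' (hv.trans hvv') i).2
  have hV_anti : ∀ u u', 0 ≤ u → u ≤ u' → V u' ≤ V u := fun u u' hu huu' j =>
    le_of_gibbsWeight_eq_one hT (fun i => hΨ₂ i j (u' i)) (fun i y => hΨ₁ i j y (huu' i))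
      (hV u hu j).2 (hV u' (hu.trans huu') j).2
  obtain ⟨v, hv, hfix⟩ := MonotoneOn.exists_isFixedPt_of_mapsTo_Icc (f := V ∘ U)
    (fun _ => hM) (fun v hv v' hv' hvv' => hV_anti _ _ (hU_mem v' hv'.1).1 (hU_anti v v' hv.1 hvv'))
    (fun v hv => hV_mem _ (hU_mem v hv.1).1)
  refine ⟨U v, v, fun i => (hU v hv.1 i).1.1, hv.1, fun i => (hU v hv.1 i).2, fun j => ?_⟩
  have hj := (hV (U v) (hU_mem v hv.1).1 j).2
  rwa [show V (U v) = v from hfix] at hj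

end RegularizedSystem

theorem regularized_system_solution_small_temperature_general
    {I J : Type*} [Fintype I] [Fintype J]
    (Ψ : I → J → ℝ → ℝ → ℝ)
    -- (a) continuity
    (ha : ∀ i j, Continuous fun p : ℝ × ℝ => Ψ i j p.1 p.2)
    -- (b) monotonicity, strict for jointly strict increases
    (hb : ∀ i j (t t' r r' : ℝ), t ≤ t' → r ≤ r' → Ψ i j t r ≤ Ψ i j t' r')
    -- (c) liminf Ψ(tₙ, rₙ) > 0 when one coordinate is bounded and the other tends to +∞
    (hc₁ : ∀ i j (t r : ℕ → ℝ), (∃ C : ℝ, ∀ k, |r k| ≤ C) → Tendsto t atTop atTop →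
      ∃ ε > 0, ∀ᶠ k in atTop, ε ≤ Ψ i j (t k) (r k))
    (hc₂ : ∀ i j (t r : ℕ → ℝ), (∃ C : ℝ, ∀ k, |t k| ≤ C) → Tendsto r atTop atTop →
      ∃ ε > 0, ∀ᶠ k in atTop, ε ≤ Ψ i j (t k) (r k)) :
    ∃ T₀ > (0 : ℝ), ∀ T : ℝ, 0 < T → T < T₀ →
      ∃ (u : I → ℝ) (v : J → ℝ),
        (∀ i, 0 ≤ u i) ∧ (∀ j, 0 ≤ v j) ∧
        (∀ i, Real.exp (-(u i) / T) + ∑ j, Real.exp (-(Ψ i j (u i) (v j)) / T) = 1) ∧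
        (∀ j, Real.exp (-(v j) / T) + ∑ i, Real.exp (-(Ψ i j (u i) (v j)) / T) = 1) := by
  have hpos : ∀ i j, (∃ t₀, 0 < Ψ i j t₀ 0) ∧ ∃ r₀, 0 < Ψ i j 0 r₀ := fun i j => by
    obtain ⟨ε₁, hε₁, h₁⟩ := hc₁ i j (↑) 0 ⟨0, by simp⟩ tendsto_natCast_atTop_atTop
    obtain ⟨ε₂, hε₂, h₂⟩ := hc₂ i j 0 (↑) ⟨0, by simp⟩ tendsto_natCast_atTop_atTop
    obtain ⟨k, hk₁, hk₂⟩ := (h₁.and h₂).exists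
    exact ⟨⟨k, hε₁.trans_le hk₁⟩, ⟨k, hε₂.trans_le hk₂⟩⟩
  have hev : ∀ᶠ ε in 𝓝[>] 0, ∀ᶠ c in atTop, ∀ i j r, 0 ≤ r → ε ≤ Ψ i j c r ∧ ε ≤ Ψ i j r c := by
    simp only [eventually_all]
    intro i j
    obtain ⟨⟨t₀, ht₀⟩, r₀, hr₀⟩ := hpos i j
    exact eventually_eventually_le_of_monotone (hb i j) ht₀ hr₀
  obtain ⟨ε, hεM, hε : 0 < ε⟩ := (hev.and self_mem_nhdsWithin).exists
  refine ⟨ε / (Fintype.card I + Fintype.card J + 1), by positivity,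
    fun T hT hTε => ?_⟩
  obtain ⟨M, hM, hMε, hMT⟩ := ((eventually_ge_atTop 0).and (hεM.and
    (eventually_exp_neg_div_add_mul_lt_one (N := Fintype.card I + Fintype.card J) hT
      (by exact_mod_cast hTε)))).exists
  exact exists_regularized_solution hT hM
    (fun i j r => (ha i j).comp (continuous_id.prodMk continuous_const))
    (fun i j t => (ha i j).comp (continuous_const.prodMk continuous_id)) hb
    (fun i j r hr => (hMε i j r hr).1) (fun i j t ht => (hMε i j t ht).2)
    (Nat.le_add_right _ _) (Nat.le_add_left _ _) hMT

/-- For all sufficiently small temperatures `T > 0`, the regularized (Gibbs)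
Bernstein–Schrödinger system associated with `Ψ` has a solution with nonnegative
payoffs. -/
theorem regularized_system_solution_small_temperature
    {I J : Type*} [Fintype I] [Fintype J]
    (Ψ : I → J → ℝ → ℝ → ℝ)
    -- (a) continuity
    (ha : ∀ i j, Continuous fun p : ℝ × ℝ => Ψ i j p.1 p.2)
    -- (b) monotonicity, strict for jointly strict increases
    (hb : ∀ i j (t t' r r' : ℝ), t ≤ t' → r ≤ r' → Ψ i j t r ≤ Ψ i j t' r')
    (hb' : ∀ i j (t t' r r' : ℝ), t < t' → r < r' → Ψ i j t r < Ψ i j t' r')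
    -- (c) liminf Ψ(tₙ, rₙ) > 0 when one coordinate is bounded and the other tends to +∞
    (hc₁ : ∀ i j (t r : ℕ → ℝ), (∃ C : ℝ, ∀ k, |r k| ≤ C) → Tendsto t atTop atTop →
      ∃ ε > 0, ∀ᶠ k in atTop, ε ≤ Ψ i j (t k) (r k))
    (hc₂ : ∀ i j (t r : ℕ → ℝ), (∃ C : ℝ, ∀ k, |t k| ≤ C) → Tendsto r atTop atTop →
      ∃ ε > 0, ∀ᶠ k in atTop, ε ≤ Ψ i j (t k) (r k))
    -- (d) limsup Ψ(tₙ, rₙ) < 0 when (tₙ - rₙ) is bounded and tₙ → -∞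
    (hd : ∀ i j (t r : ℕ → ℝ), (∃ C : ℝ, ∀ k, |t k - r k| ≤ C) → Tendsto t atTop atBot →
      ∃ ε > 0, ∀ᶠ k in atTop, Ψ i j (t k) (r k) ≤ -ε) :
    ∃ T₀ > (0 : ℝ), ∀ T : ℝ, 0 < T → T < T₀ →
      ∃ (u : I → ℝ) (v : J → ℝ),
        (∀ i, 0 ≤ u i) ∧ (∀ j, 0 ≤ v j) ∧
        (∀ i, Real.exp (-(u i) / T) + ∑ j, Real.exp (-(Ψ i j (u i) (v j)) / T) = 1) ∧
        (∀ j, Real.exp (-(v j) / T) + ∑ i, Real.exp (-(Ψ i j (u i) (v j)) / T) = 1) :=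
  regularized_system_solution_small_temperature_general Ψ ha hb hc₁ hc₂
end

section
/- Let Ψ : ℝ × ℝ → ℝ be continuous, nondecreasing in each argument and jointly strictly increasing, with Ψ(t,t) → +∞ as t → +∞ and Ψ(t,t) → −∞ as t → −∞, and let T > 0. Define M(u,v) as the unique m > 0 with Ψ(T·log m + u, T·log m + v) = 0. Then M is continuous, nonincreasing in each of its arguments, and satisfies the scaling identity M(u + c, v + c) = exp(−c/T)·M(u, v) for all u, v, c ∈ ℝ. -/
/-!
Write `z(u, v) = T log M(u, v)`, so that `z(u, v)` is a zero of `s ↦ Ψ(s + u, s + v)`. Joint strict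
monotonicity makes this function of `s` strictly increasing, and a zero of a jointly continuous
family of strictly increasing functions depends continuously on the parameter.
The same strict monotonicity forbids two zeros `(t, r)`, `(t', r')` of `Ψ` with `t < t'` and
`r < r'`, which makes `z` nonincreasing in `u` and in `v`. Finally, shifting both arguments by `c`
shifts the zero by `-c`, which is the scaling identity for `M = exp (z / T)`.
-/

open Filter Topology

theorem continuous_of_strictMono_of_eq_zero {X : Type*} [TopologicalSpace X] {F : X → ℝ → ℝ}
    (hF : Continuous (Function.uncurry F)) (hmono : ∀ x, StrictMono (F x)) {z : X → ℝ}
    (hz : ∀ x, F x (z x) = 0) : Continuous z := by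
  have hFa : ∀ a, Continuous fun x => F x a := fun _ =>
    hF.comp (continuous_id.prodMk continuous_const)
  refine continuous_iff_continuousAt.2 fun p => tendsto_order.2 ⟨fun a ha => ?_, fun a ha => ?_⟩
  · have hneg : F p a < 0 := hz p ▸ hmono p ha
    filter_upwards [(hFa a).continuousAt.eventually_lt continuousAt_const hneg] with q hq
    exact (hmono q).lt_iff_lt.1 (hz q ▸ hq)
  · have hpos : 0 < F p a := hz p ▸ hmono p ha
    filter_upwards [continuousAt_const.eventually_lt (hFa a).continuousAt hpos] with q hq
    exact (hmono q).lt_iff_lt.1 (hz q ▸ hq)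

section

variable {Ψ : ℝ → ℝ → ℝ}

theorem strictMono_diagonal_shift
    (hstrict : ∀ t t' r r' : ℝ, t < t' → r < r' → Ψ t r < Ψ t' r') (u v : ℝ) :
    StrictMono fun s => Ψ (s + u) (s + v) :=
  fun _ _ h => hstrict _ _ _ _ (by linarith) (by linarith)

theorem antitone_of_diagonal_zero
    (hstrict : ∀ t t' r r' : ℝ, t < t' → r < r' → Ψ t r < Ψ t' r') {z : ℝ → ℝ → ℝ}
    (hz : ∀ u v, Ψ (z u v + u) (z u v + v) = 0) :
    (∀ v, Antitone fun u => z u v) ∧ (∀ u, Antitone fun v => z u v) := by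
  constructor
  · intro v u u' hu
    by_contra! hlt
    exact (hstrict _ _ _ _ (by linarith) (by linarith)).ne ((hz u v).trans (hz u' v).symm)
  · intro u v v' hv
    by_contra! hlt
    exact (hstrict _ _ _ _ (by linarith) (by linarith)).ne ((hz u v).trans (hz u v').symm)

theorem diagonal_zero_exp_mul {T m u v : ℝ} (hT : T ≠ 0) (hm : 0 < m)
    (h : Ψ (T * Real.log m + u) (T * Real.log m + v) = 0) (c : ℝ) :
    Ψ (T * Real.log (Real.exp (-c / T) * m) + (u + c))
      (T * Real.log (Real.exp (-c / T) * m) + (v + c)) = 0 := by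
  have hlog : T * Real.log (Real.exp (-c / T) * m) = T * Real.log m - c := by
    rw [Real.log_mul (Real.exp_ne_zero _) hm.ne', Real.log_exp, mul_add, mul_div_cancel₀ _ hT]
    ring
  rw [hlog]
  convert h using 2 <;> ring

end

theorem matching_function_properties_general
    (Ψ : ℝ → ℝ → ℝ)
    (hcont : Continuous fun p : ℝ × ℝ => Ψ p.1 p.2)
    (hstrict : ∀ t t' r r' : ℝ, t < t' → r < r' → Ψ t r < Ψ t' r')
    (T : ℝ) (hT : 0 < T)
    (M : ℝ → ℝ → ℝ)
    (hM : ∀ u v, 0 < M u v ∧ Ψ (T * Real.log (M u v) + u) (T * Real.log (M u v) + v) = 0)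
    (hMuniq : ∀ u v m : ℝ, 0 < m → Ψ (T * Real.log m + u) (T * Real.log m + v) = 0 →
      m = M u v) :
    Continuous (fun p : ℝ × ℝ => M p.1 p.2) ∧
    (∀ v, Antitone fun u => M u v) ∧
    (∀ u, Antitone fun v => M u v) ∧
    (∀ u v c : ℝ, M (u + c) (v + c) = Real.exp (-c / T) * M u v) := by
  set z : ℝ → ℝ → ℝ := fun u v => T * Real.log (M u v)
  have hz : ∀ u v, Ψ (z u v + u) (z u v + v) = 0 := fun u v => (hM u v).2
  have hMz : M = fun u v => Real.exp (z u v / T) := by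
    funext u v
    rw [mul_div_cancel_left₀ _ hT.ne', Real.exp_log (hM u v).1]
  have hexp : Monotone fun s => Real.exp (s / T) :=
    fun _ _ h => Real.exp_le_exp.2 (div_le_div_of_nonneg_right h hT.le)
  obtain ⟨hanti₁, hanti₂⟩ := antitone_of_diagonal_zero hstrict hz
  have hzcont : Continuous fun p : ℝ × ℝ => z p.1 p.2 :=
    continuous_of_strictMono_of_eq_zero (F := fun (p : ℝ × ℝ) s => Ψ (s + p.1) (s + p.2))
      (hcont.comp (f := fun q : (ℝ × ℝ) × ℝ => (q.2 + q.1.1, q.2 + q.1.2)) (by fun_prop))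
      (fun p => strictMono_diagonal_shift hstrict p.1 p.2) (fun p => hz p.1 p.2)
  refine ⟨?_, fun v => ?_, fun u => ?_, fun u v c => ?_⟩
  · rw [hMz]
    exact Real.continuous_exp.comp (hzcont.div_const T)
  · rw [hMz]
    exact hexp.comp_antitone (hanti₁ v)
  · rw [hMz]
    exact hexp.comp_antitone (hanti₂ u)
  · exact (hMuniq _ _ _ (mul_pos (Real.exp_pos _) (hM u v).1)
      (diagonal_zero_exp_mul hT.ne' (hM u v).1 (hM u v).2 c)).symm

/-- The implicit matching function `M` associated with a transfer function `Ψ` is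
continuous, nonincreasing in each argument, and satisfies the scaling identity
`M(u + c, v + c) = exp(-c/T) · M(u, v)`. -/
theorem matching_function_properties
    (Ψ : ℝ → ℝ → ℝ)
    (hcont : Continuous fun p : ℝ × ℝ => Ψ p.1 p.2)
    (hmono₁ : ∀ r, Monotone fun t => Ψ t r)
    (hmono₂ : ∀ t, Monotone fun r => Ψ t r)
    (hstrict : ∀ t t' r r' : ℝ, t < t' → r < r' → Ψ t r < Ψ t' r')
    (htop : Tendsto (fun t => Ψ t t) atTop atTop)
    (hbot : Tendsto (fun t => Ψ t t) atBot atBot)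
    (T : ℝ) (hT : 0 < T)
    (M : ℝ → ℝ → ℝ)
    (hM : ∀ u v, 0 < M u v ∧ Ψ (T * Real.log (M u v) + u) (T * Real.log (M u v) + v) = 0)
    (hMuniq : ∀ u v m : ℝ, 0 < m → Ψ (T * Real.log m + u) (T * Real.log m + v) = 0 →
      m = M u v) :
    Continuous (fun p : ℝ × ℝ => M p.1 p.2) ∧
    (∀ v, Antitone fun u => M u v) ∧
    (∀ u, Antitone fun v => M u v) ∧
    (∀ u v c : ℝ, M (u + c) (v + c) = Real.exp (-c / T) * M u v) :=
  matching_function_properties_general Ψ hcont hstrict T hT M hM hMuniq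
end

section
/- Let X, Y be finite sets, n : X → ℝ and m : Y → ℝ with positive entries, T > 0, and for each x, y let Ψ_{xy} : ℝ × ℝ → ℝ be continuous and jointly strictly increasing, with unique implicit matching function M_{xy}(u,v) defined by Ψ_{xy}(T·log M_{xy}(u,v) + u, T·log M_{xy}(u,v) + v) = 0. Then the map (u, v) ↦ (μ_{xy}, μ_{x0}, μ_{0y}) given by μ_{xy} = M_{xy}(u_x, v_y), μ_{x0} = exp(−u_x/T), μ_{0y} = exp(−v_y/T) is a bijection between solutions (u, v) ∈ ℝ^X × ℝ^Y of the nonlinear Bernstein–Schrödinger system M_{x0}(u_x) + Σ_y M_{xy}(u_x, v_y) = n_x, M_{0y}(v_y) + Σ_x M_{xy}(u_x, v_y) = m_y (with M_{x0}(u) = exp(−u/T), M_{0y}(v) = exp(−v/T)) and solutions with positive entries (μ_{xy}, μ_{x0}, μ_{0y}) of the aggregate matching system: μ_{x0} + Σ_{y∈Y} μ_{xy} = n_x for all x, μ_{0y} + Σ_{x∈X} μ_{xy} = m_y for all y, and Ψ_{xy}(T·log(μ_{xy}/μ_{x0}), T·log(μ_{xy}/μ_{0y})) = 0 for all x, y.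 -/
/-!
The change of variables `a = exp (-u / T)`, with inverse `u = -T log a`, is a bijection
`ℝ → (0, ∞)`. Under it `T log (μ / a) = T log μ + u`, so the aggregate equation
`Ψ (T log (μ / a)) (T log (μ / b)) = 0` says exactly that `μ` solves the implicit equation
defining `M u v`; by uniqueness `μ = M u v`, and the two systems correspond term by term.
-/

open Real

namespace BernsteinSchrodinger

variable {T : ℝ}

theorem neg_mul_log_exp_neg_div (hT : T ≠ 0) (u : ℝ) : -T * log (exp (-u / T)) = u := by
  rw [log_exp]
  field_simp

theorem exp_neg_div_neg_mul_log (hT : T ≠ 0) {a : ℝ} (ha : 0 < a) :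
    exp (-(-T * log a) / T) = a := by
  rw [neg_mul, neg_neg, mul_div_cancel_left₀ _ hT, exp_log ha]

theorem exp_neg_div_injective (hT : T ≠ 0) : Function.Injective fun u : ℝ => exp (-u / T) :=
  Function.LeftInverse.injective (g := fun a => -T * log a) (neg_mul_log_exp_neg_div hT)

theorem mul_log_div_eq {μ a : ℝ} (hμ : 0 < μ) (ha : 0 < a) :
    T * log (μ / a) = T * log μ + -T * log a := by
  rw [log_div hμ.ne' ha.ne']
  ring

theorem matching_eq_zero_iff {Ψ M : ℝ → ℝ → ℝ} {μ a b : ℝ}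
    (hM : ∀ u v, Ψ (T * log (M u v) + u) (T * log (M u v) + v) = 0)
    (hMuniq : ∀ u v μ, 0 < μ → Ψ (T * log μ + u) (T * log μ + v) = 0 → μ = M u v)
    (hμ : 0 < μ) (ha : 0 < a) (hb : 0 < b) :
    Ψ (T * log (μ / a)) (T * log (μ / b)) = 0 ↔ μ = M (-T * log a) (-T * log b) := by
  rw [mul_log_div_eq hμ ha, mul_log_div_eq hμ hb]
  refine ⟨hMuniq _ _ _ hμ, ?_⟩
  rintro rfl
  exact hM _ _

end BernsteinSchrodinger

open BernsteinSchrodinger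

theorem bernstein_schrodinger_aggregate_bijection_general
    {X Y : Type*} [Fintype X] [Fintype Y]
    (n : X → ℝ) (m : Y → ℝ)
    (T : ℝ) (hT : 0 < T)
    (Ψ : X → Y → ℝ → ℝ → ℝ)
    -- the implicit matching functions
    (M : X → Y → ℝ → ℝ → ℝ)
    (hM : ∀ x y (u v : ℝ), 0 < M x y u v ∧
      Ψ x y (T * Real.log (M x y u v) + u) (T * Real.log (M x y u v) + v) = 0)
    (hMuniq : ∀ x y (u v μ : ℝ), 0 < μ →
      Ψ x y (T * Real.log μ + u) (T * Real.log μ + v) = 0 → μ = M x y u v) :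
    Set.BijOn
      (fun p : (X → ℝ) × (Y → ℝ) =>
        ((fun x y => M x y (p.1 x) (p.2 y),
          fun x => Real.exp (-(p.1 x) / T),
          fun y => Real.exp (-(p.2 y) / T)) :
          (X → Y → ℝ) × (X → ℝ) × (Y → ℝ)))
      -- solutions of the nonlinear Bernstein–Schrödinger system
      {p : (X → ℝ) × (Y → ℝ) |
        (∀ x, Real.exp (-(p.1 x) / T) + ∑ y, M x y (p.1 x) (p.2 y) = n x) ∧
        (∀ y, Real.exp (-(p.2 y) / T) + ∑ x, M x y (p.1 x) (p.2 y) = m y)}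
      -- positive solutions of the aggregate matching system
      {q : (X → Y → ℝ) × (X → ℝ) × (Y → ℝ) |
        (∀ x y, 0 < q.1 x y) ∧ (∀ x, 0 < q.2.1 x) ∧ (∀ y, 0 < q.2.2 y) ∧
        (∀ x, q.2.1 x + ∑ y, q.1 x y = n x) ∧
        (∀ y, q.2.2 y + ∑ x, q.1 x y = m y) ∧
        (∀ x y, Ψ x y (T * Real.log (q.1 x y / q.2.1 x))
          (T * Real.log (q.1 x y / q.2.2 y)) = 0)} := by
  have hT0 := hT.ne'
  have hmatch : ∀ x y {μ a b : ℝ}, 0 < μ → 0 < a → 0 < b →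
      (Ψ x y (T * log (μ / a)) (T * log (μ / b)) = 0 ↔
        μ = M x y (-T * log a) (-T * log b)) := fun x y _ _ _ =>
    matching_eq_zero_iff (fun u v => (hM x y u v).2) (hMuniq x y)
  refine ⟨?_, ?_, ?_⟩
  · rintro ⟨u, v⟩ ⟨hrow, hcol⟩
    refine ⟨fun x y => (hM x y _ _).1, fun x => exp_pos _, fun y => exp_pos _, hrow, hcol,
      fun x y => ?_⟩
    rw [hmatch x y (hM x y _ _).1 (exp_pos _) (exp_pos _), neg_mul_log_exp_neg_div hT0,
      neg_mul_log_exp_neg_div hT0]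
  · rintro ⟨u, v⟩ - ⟨u', v'⟩ - h
    simp only [Prod.mk.injEq] at h
    obtain ⟨-, hu, hv⟩ := h
    exact Prod.ext (funext fun x => exp_neg_div_injective hT0 (congrFun hu x))
      (funext fun y => exp_neg_div_injective hT0 (congrFun hv y))
  · rintro ⟨μ, a, b⟩ ⟨hμ, ha, hb, hrow, hcol, hΨ⟩
    have hMμ : ∀ x y, M x y (-T * log (a x)) (-T * log (b y)) = μ x y := fun x y =>
      ((hmatch x y (hμ x y) (ha x) (hb y)).mp (hΨ x y)).symm
    refine ⟨(fun x => -T * log (a x), fun y => -T * log (b y)), ⟨fun x => ?_, fun y => ?_⟩, ?_⟩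
    · simpa only [hMμ, exp_neg_div_neg_mul_log hT0 (ha x)] using hrow x
    · simpa only [hMμ, exp_neg_div_neg_mul_log hT0 (hb y)] using hcol y
    · simp only [hMμ, exp_neg_div_neg_mul_log hT0 (ha _), exp_neg_div_neg_mul_log hT0 (hb _)]

/-- The map `(u, v) ↦ (μ_{xy}, μ_{x0}, μ_{0y})` is a bijection between the solutions of
the nonlinear Bernstein–Schrödinger system and the positive solutions of the aggregate
matching system. -/
theorem bernstein_schrodinger_aggregate_bijection
    {X Y : Type*} [Fintype X] [Fintype Y]
    (n : X → ℝ) (m : Y → ℝ) (hn : ∀ x, 0 < n x) (hm : ∀ y, 0 < m y)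
    (T : ℝ) (hT : 0 < T)
    (Ψ : X → Y → ℝ → ℝ → ℝ)
    (hcont : ∀ x y, Continuous fun p : ℝ × ℝ => Ψ x y p.1 p.2)
    (hstrict : ∀ x y (t t' r r' : ℝ), t < t' → r < r' → Ψ x y t r < Ψ x y t' r')
    -- the implicit matching functions
    (M : X → Y → ℝ → ℝ → ℝ)
    (hM : ∀ x y (u v : ℝ), 0 < M x y u v ∧
      Ψ x y (T * Real.log (M x y u v) + u) (T * Real.log (M x y u v) + v) = 0)
    (hMuniq : ∀ x y (u v μ : ℝ), 0 < μ →
      Ψ x y (T * Real.log μ + u) (T * Real.log μ + v) = 0 → μ = M x y u v) :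
    Set.BijOn
      (fun p : (X → ℝ) × (Y → ℝ) =>
        ((fun x y => M x y (p.1 x) (p.2 y),
          fun x => Real.exp (-(p.1 x) / T),
          fun y => Real.exp (-(p.2 y) / T)) :
          (X → Y → ℝ) × (X → ℝ) × (Y → ℝ)))
      -- solutions of the nonlinear Bernstein–Schrödinger system
      {p : (X → ℝ) × (Y → ℝ) |
        (∀ x, Real.exp (-(p.1 x) / T) + ∑ y, M x y (p.1 x) (p.2 y) = n x) ∧
        (∀ y, Real.exp (-(p.2 y) / T) + ∑ x, M x y (p.1 x) (p.2 y) = m y)}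
      -- positive solutions of the aggregate matching system
      {q : (X → Y → ℝ) × (X → ℝ) × (Y → ℝ) |
        (∀ x y, 0 < q.1 x y) ∧ (∀ x, 0 < q.2.1 x) ∧ (∀ y, 0 < q.2.2 y) ∧
        (∀ x, q.2.1 x + ∑ y, q.1 x y = n x) ∧
        (∀ y, q.2.2 y + ∑ x, q.1 x y = m y) ∧
        (∀ x y, Ψ x y (T * Real.log (q.1 x y / q.2.1 x))
          (T * Real.log (q.1 x y / q.2.2 y)) = 0)} :=
  bernstein_schrodinger_aggregate_bijection_general n m T hT Ψ M hM hMuniq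
end

section
/- Let X, Y be finite sets, n : X → ℝ and m : Y → ℝ with positive entries, and T > 0. Suppose each Ψ_{xy} : ℝ × ℝ → ℝ is continuous, jointly strictly increasing, and satisfies, for each fixed value of one argument, Ψ_{xy}(t, r) → +∞ as t → +∞, Ψ_{xy}(t, r) → −∞ as t → −∞, Ψ_{xy}(t, r) → +∞ as r → +∞, and Ψ_{xy}(t, r) → −∞ as r → −∞. Then the aggregate matching system — μ_{x0} + Σ_{y∈Y} μ_{xy} = n_x for all x ∈ X, μ_{0y} + Σ_{x∈X} μ_{xy} = m_y for all y ∈ Y, and Ψ_{xy}(T·log(μ_{xy}/μ_{x0}), T·log(μ_{xy}/μ_{0y})) = 0 for all x, y, in unknowns μ_{xy} > 0, μ_{x0} > 0, μ_{0y} > 0 — has a solution; and if moreover each Ψ_{xy} is continuously differentiable, the solution is unique. -/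
/-! In log coordinates `α = log μ_{x0}`, `β = log μ_{0y}`, the equation for the pair `(x, y)`
has a unique root `log μ_{xy} = σ_{xy}(α_x, β_y)`, and `σ_{xy}` is continuous, increasing in
both arguments and tends to `-∞` with either of them. The marginal equations then define
`α = A(β)` (antitone) and, given `α`, `β = B(α)` (antitone), so `B ∘ A` is a monotone map of
`Y → ℝ` into a box; its greatest fixed point gives a solution. Any other solution `(α', β')`
has `β' ≤ β`, hence `α ≤ α'`, and the accounting identity
`∑ exp α - ∑ exp β = ∑ n - ∑ m`, shared by all solutions, forces equality. -/

open Filter Topology Real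

theorem continuous_of_strictMono_of_apply_eq_zero {P : Type*} [TopologicalSpace P]
    {G : P → ℝ → ℝ} (hG : ∀ s, Continuous fun p => G p s) (hmono : ∀ p, StrictMono (G p))
    {r : P → ℝ} (hr : ∀ p, G p (r p) = 0) : Continuous r := by
  refine continuous_iff_continuousAt.2 fun p₀ => tendsto_order.2 ⟨fun l hl => ?_, fun u hu => ?_⟩
  · have hneg : G p₀ l < 0 := hr p₀ ▸ hmono p₀ hl
    filter_upwards [(hG l).continuousAt.eventually (gt_mem_nhds hneg)] with p hp
    exact (hmono p).lt_iff_lt.1 (hp.trans_eq (hr p).symm)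
  · have hpos : 0 < G p₀ u := hr p₀ ▸ hmono p₀ hu
    filter_upwards [(hG u).continuousAt.eventually (lt_mem_nhds hpos)] with p hp
    exact (hmono p).lt_iff_lt.1 ((hr p).trans_lt hp)

theorem exists_fixedPoint_forall_le_of_monotone {α : Type*} [ConditionallyCompleteLattice α]
    {f : α → α} (hf : Monotone f) {lo hi : α} (hlo : lo ≤ f lo) (hhi : ∀ a, f a ≤ hi) :
    ∃ p, f p = p ∧ ∀ q, q ≤ f q → q ≤ p := by
  set S := {q | q ≤ f q}
  have hbdd : BddAbove S := ⟨hi, fun q hq => hq.trans (hhi q)⟩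
  have hle : ∀ q ∈ S, q ≤ sSup S := fun q hq => le_csSup hbdd hq
  have hpost : sSup S ≤ f (sSup S) := csSup_le ⟨lo, hlo⟩ fun q hq => hq.trans (hf (hle q hq))
  exact ⟨sSup S, le_antisymm (hle _ (hf hpost)) hpost, hle⟩

section JointlyStrictMono

variable {f : ℝ → ℝ → ℝ} {T : ℝ}

theorem tendsto_atTop_of_jointlyStrictMono {ι : Type*} {l : Filter ι}
    (hf : ∀ t t' r r', t < t' → r < r' → f t r < f t' r')
    (htop : ∀ r, Tendsto (f · r) atTop atTop) {u v : ι → ℝ}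
    (hu : Tendsto u l atTop) (hv : Tendsto v l atTop) :
    Tendsto (fun i => f (u i) (v i)) l atTop := by
  refine tendsto_atTop.2 fun C => ?_
  obtain ⟨t₀, ht₀⟩ := ((htop 0).eventually_ge_atTop C).exists
  filter_upwards [hu.eventually_gt_atTop t₀, hv.eventually_gt_atTop 0] with i hui hvi
  exact ht₀.trans (hf _ _ _ _ hui hvi).le

theorem tendsto_atBot_of_jointlyStrictMono {ι : Type*} {l : Filter ι}
    (hf : ∀ t t' r r', t < t' → r < r' → f t r < f t' r')
    (hbot : ∀ r, Tendsto (f · r) atBot atBot) {u v : ι → ℝ}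
    (hu : Tendsto u l atBot) (hv : Tendsto v l atBot) :
    Tendsto (fun i => f (u i) (v i)) l atBot := by
  refine tendsto_atBot.2 fun C => ?_
  obtain ⟨t₀, ht₀⟩ := ((hbot 0).eventually_le_atBot C).exists
  filter_upwards [hu.eventually_lt_atBot t₀, hv.eventually_lt_atBot 0] with i hui hvi
  exact (hf _ _ _ _ hui hvi).le.trans ht₀

theorem strictMono_gap (hT : 0 < T) (hf : ∀ t t' r r', t < t' → r < r' → f t r < f t' r')
    (α β : ℝ) : StrictMono fun s => f (T * (s - α)) (T * (s - β)) :=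
  fun _ _ h => hf _ _ _ _ (by gcongr) (by gcongr)

theorem exists_gap_eq_zero (hT : 0 < T) (hc : Continuous fun p : ℝ × ℝ => f p.1 p.2)
    (hf : ∀ t t' r r', t < t' → r < r' → f t r < f t' r')
    (htop : ∀ r, Tendsto (f · r) atTop atTop) (hbot : ∀ r, Tendsto (f · r) atBot atBot)
    (α β : ℝ) : ∃ s, f (T * (s - α)) (T * (s - β)) = 0 := by
  have hlin_top : ∀ c : ℝ, Tendsto (fun s => T * (s - c)) atTop atTop := fun c =>
    (tendsto_atTop_add_const_right atTop (-c) tendsto_id).const_mul_atTop hT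
  have hlin_bot : ∀ c : ℝ, Tendsto (fun s => T * (s - c)) atBot atBot := fun c =>
    (tendsto_atBot_add_const_right atBot (-c) tendsto_id).const_mul_atBot hT
  have hg : Continuous fun s => f (T * (s - α)) (T * (s - β)) :=
    hc.comp (by fun_prop : Continuous fun s : ℝ => (T * (s - α), T * (s - β)))
  exact hg.surjective
    (tendsto_atTop_of_jointlyStrictMono hf htop (hlin_top α) (hlin_top β))
    (tendsto_atBot_of_jointlyStrictMono hf hbot (hlin_bot α) (hlin_bot β)) 0

theorem tendsto_mul_sub_atBot_atTop (hT : 0 < T) (C : ℝ) :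
    Tendsto (fun α => T * (C - α)) atBot atTop := by
  have h : Tendsto (fun α : ℝ => C - α) atBot atTop := by
    simpa [sub_eq_add_neg] using tendsto_atTop_add_const_left atBot C tendsto_neg_atBot_atTop
  exact h.const_mul_atTop hT

variable {σ : ℝ → ℝ → ℝ}

theorem eq_root_of_gap_eq_zero (hT : 0 < T)
    (hf : ∀ t t' r r', t < t' → r < r' → f t r < f t' r')
    (hσ : ∀ α β, f (T * (σ α β - α)) (T * (σ α β - β)) = 0) {α β s : ℝ}
    (h : f (T * (s - α)) (T * (s - β)) = 0) : s = σ α β :=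
  (strictMono_gap hT hf α β).injective (h.trans (hσ α β).symm)

theorem root_mono (hT : 0 < T) (hf : ∀ t t' r r', t < t' → r < r' → f t r < f t' r')
    (hσ : ∀ α β, f (T * (σ α β - α)) (T * (σ α β - β)) = 0) {α α' β β' : ℝ}
    (hα : α ≤ α') (hβ : β ≤ β') : σ α β ≤ σ α' β' := by
  by_contra! h
  have hlt₁ : T * (σ α' β' - α') < T * (σ α β - α) := mul_lt_mul_of_pos_left (by linarith) hT
  have hlt₂ : T * (σ α' β' - β') < T * (σ α β - β) := mul_lt_mul_of_pos_left (by linarith) hT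
  simpa only [hσ, lt_irrefl] using hf _ _ _ _ hlt₁ hlt₂

theorem continuous_root (hT : 0 < T) (hc : Continuous fun p : ℝ × ℝ => f p.1 p.2)
    (hf : ∀ t t' r r', t < t' → r < r' → f t r < f t' r')
    (hσ : ∀ α β, f (T * (σ α β - α)) (T * (σ α β - β)) = 0) :
    Continuous fun p : ℝ × ℝ => σ p.1 p.2 :=
  continuous_of_strictMono_of_apply_eq_zero (G := fun p s => f (T * (s - p.1)) (T * (s - p.2)))
    (fun s => hc.comp (by fun_prop : Continuous fun p : ℝ × ℝ => (T * (s - p.1), T * (s - p.2))))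
    (fun p => strictMono_gap hT hf p.1 p.2) (fun p => hσ p.1 p.2)

theorem tendsto_root_atBot_left (hT : 0 < T)
    (hf : ∀ t t' r r', t < t' → r < r' → f t r < f t' r')
    (htop : ∀ r, Tendsto (f · r) atTop atTop)
    (hσ : ∀ α β, f (T * (σ α β - α)) (T * (σ α β - β)) = 0) (β : ℝ) :
    Tendsto (σ · β) atBot atBot := by
  refine tendsto_atBot.2 fun C => ?_
  filter_upwards [((htop _).comp (tendsto_mul_sub_atBot_atTop hT C)).eventually_ge_atTop 0]
    with α hα
  exact (strictMono_gap hT hf α β).le_iff_le.1 ((hσ α β).trans_le hα)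

theorem tendsto_root_atBot_right (hT : 0 < T)
    (hf : ∀ t t' r r', t < t' → r < r' → f t r < f t' r')
    (htop : ∀ t, Tendsto (f t ·) atTop atTop)
    (hσ : ∀ α β, f (T * (σ α β - α)) (T * (σ α β - β)) = 0) (α : ℝ) :
    Tendsto (σ α ·) atBot atBot := by
  refine tendsto_atBot.2 fun C => ?_
  filter_upwards [((htop _).comp (tendsto_mul_sub_atBot_atTop hT C)).eventually_ge_atTop 0]
    with β hβ
  exact (strictMono_gap hT hf α β).le_iff_le.1 ((hσ α β).trans_le hβ)

end JointlyStrictMono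

section TotalMass

variable {ι : Type*} [Fintype ι] {s s' : ι → ℝ → ℝ}

/-- `exp a` is the unmatched mass of a type and `exp (s i a)` its matches with partner `i`. -/
noncomputable def totalMass (s : ι → ℝ → ℝ) (a : ℝ) : ℝ :=
  exp a + ∑ i, exp (s i a)

theorem strictMono_totalMass (hs : ∀ i, Monotone (s i)) : StrictMono (totalMass s) :=
  fun _ _ h => add_lt_add_of_lt_of_le (exp_lt_exp.2 h)
    (Finset.sum_le_sum fun i _ => exp_le_exp.2 (hs i h.le))

theorem totalMass_le_totalMass (h : ∀ i a, s i a ≤ s' i a) (a : ℝ) :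
    totalMass s a ≤ totalMass s' a :=
  add_le_add_right (Finset.sum_le_sum fun i _ => exp_le_exp.2 (h i a)) _

theorem exp_le_totalMass (a : ℝ) : exp a ≤ totalMass s a :=
  le_add_of_nonneg_right (Finset.sum_nonneg fun _ _ => (exp_pos _).le)

theorem le_log_of_totalMass_eq {a c : ℝ} (h : totalMass s a = c) : a ≤ log c := by
  simpa only [log_exp] using log_le_log (exp_pos a) (h ▸ exp_le_totalMass a)

theorem le_of_totalMass_eq (hs' : ∀ i, Monotone (s' i)) (hle : ∀ i a, s i a ≤ s' i a)
    {a a' c : ℝ} (h : totalMass s a = c) (h' : totalMass s' a' = c) : a' ≤ a :=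
  (strictMono_totalMass hs').le_iff_le.1
    (h'.trans_le (h.symm.trans_le (totalMass_le_totalMass hle a)))

theorem exists_totalMass_eq (hcont : ∀ i, Continuous (s i))
    (hbot : ∀ i, Tendsto (s i) atBot atBot) {c : ℝ} (hc : 0 < c) : ∃ a, totalMass s a = c := by
  have hlim : Tendsto (fun a => exp a + ∑ i, exp (s i a)) atBot (𝓝 0) := by
    simpa using tendsto_exp_atBot.add
      (tendsto_finsetSum Finset.univ fun i _ => tendsto_exp_atBot.comp (hbot i))
  obtain ⟨a₀, ha₀⟩ := (hlim.eventually (gt_mem_nhds hc)).exists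
  have hhi : c ≤ totalMass s (log c) := by simpa only [exp_log hc] using exp_le_totalMass (log c)
  exact intermediate_value_univ a₀ (log c)
    (continuous_exp.add (continuous_finsetSum _ fun i _ => continuous_exp.comp (hcont i)))
    ⟨ha₀.le, hhi⟩

theorem eq_of_le_of_sum_exp_eq {f g : ι → ℝ} (hle : f ≤ g)
    (h : ∑ i, exp (f i) = ∑ i, exp (g i)) : f = g :=
  funext fun i => exp_injective <|
    (Finset.sum_eq_sum_iff_of_le fun i _ => exp_le_exp.2 (hle i)).1 h i (Finset.mem_univ i)

end TotalMass

section LogSystem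

variable {X Y : Type*} [Fintype X] [Fintype Y] {n : X → ℝ} {m : Y → ℝ}
  {σ : X → Y → ℝ → ℝ → ℝ}

/-- The marginal equations in the unknowns `α = log μ_{x0}`, `β = log μ_{0y}`, once every
`log μ_{xy}` has been replaced by `σ x y (α x) (β y)`. -/
def IsLogSolution (n : X → ℝ) (m : Y → ℝ) (σ : X → Y → ℝ → ℝ → ℝ) (α : X → ℝ) (β : Y → ℝ) :
    Prop :=
  (∀ x, totalMass (fun y a => σ x y a (β y)) (α x) = n x) ∧
    ∀ y, totalMass (fun x b => σ x y (α x) b) (β y) = m y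

theorem IsLogSolution.sum_exp_sub_sum_exp {α : X → ℝ} {β : Y → ℝ}
    (h : IsLogSolution n m σ α β) :
    ∑ x, exp (α x) - ∑ y, exp (β y) = ∑ x, n x - ∑ y, m y := by
  simp only [← h.1, ← h.2, totalMass, Finset.sum_add_distrib]
  rw [Finset.sum_comm (f := fun y x => exp (σ x y (α x) (β y)))]
  ring

theorem IsLogSolution.eq_of_le
    (hmono : ∀ x y a a' b b', a ≤ a' → b ≤ b' → σ x y a b ≤ σ x y a' b')
    {α α' : X → ℝ} {β β' : Y → ℝ} (h : IsLogSolution n m σ α β)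
    (h' : IsLogSolution n m σ α' β') (hle : β' ≤ β) : α' = α ∧ β' = β := by
  have hα : α ≤ α' := fun x =>
    le_of_totalMass_eq (s := fun y a => σ x y a (β' y)) (s' := fun y a => σ x y a (β y))
      (fun y _ _ hab => hmono x y _ _ _ _ hab le_rfl)
      (fun y a => hmono x y a a _ _ le_rfl (hle y)) (h'.1 x) (h.1 x)
  have hsum := h.sum_exp_sub_sum_exp.trans h'.sum_exp_sub_sum_exp.symm
  have hα_sum : ∑ x, exp (α x) ≤ ∑ x, exp (α' x) :=
    Finset.sum_le_sum fun x _ => exp_le_exp.2 (hα x)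
  have hβ_sum : ∑ y, exp (β' y) ≤ ∑ y, exp (β y) :=
    Finset.sum_le_sum fun y _ => exp_le_exp.2 (hle y)
  exact ⟨(eq_of_le_of_sum_exp_eq hα (by linarith)).symm, eq_of_le_of_sum_exp_eq hle (by linarith)⟩

theorem exists_isLogSolution_forall_le (hn : ∀ x, 0 < n x) (hm : ∀ y, 0 < m y)
    (hmono : ∀ x y a a' b b', a ≤ a' → b ≤ b' → σ x y a b ≤ σ x y a' b')
    (hcont : ∀ x y, Continuous fun p : ℝ × ℝ => σ x y p.1 p.2)
    (hbot₁ : ∀ x y b, Tendsto (σ x y · b) atBot atBot)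
    (hbot₂ : ∀ x y a, Tendsto (σ x y a ·) atBot atBot) :
    ∃ α β, IsLogSolution n m σ α β ∧ ∀ α' β', IsLogSolution n m σ α' β' → β' ≤ β := by
  have hmono₁ : ∀ x y b, Monotone (σ x y · b) := fun x y _ _ _ h => hmono x y _ _ _ _ h le_rfl
  have hmono₂ : ∀ x y a, Monotone (σ x y a ·) := fun x y _ _ _ h => hmono x y _ _ _ _ le_rfl h
  choose A hA using fun (β : Y → ℝ) x =>
    exists_totalMass_eq (s := fun y a => σ x y a (β y))
      (fun y => (hcont x y).comp (continuous_id.prodMk continuous_const))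
      (fun y => hbot₁ x y _) (hn x)
  choose B hB using fun (α : X → ℝ) y =>
    exists_totalMass_eq (s := fun x b => σ x y (α x) b)
      (fun x => (hcont x y).comp (continuous_const.prodMk continuous_id))
      (fun x => hbot₂ x y _) (hm y)
  have hA_anti : Antitone A := fun β β' h x =>
    le_of_totalMass_eq (fun y => hmono₁ x y _) (fun y a => hmono₂ x y a (h y)) (hA β x) (hA β' x)
  have hB_anti : Antitone B := fun α α' h y =>
    le_of_totalMass_eq (fun x => hmono₂ x y _) (fun x b => hmono₁ x y b (h x)) (hB α y) (hB α' y)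
  -- `A β ≤ log n` for every `β`, so `B (log n)` lies below every value of `B ∘ A`.
  obtain ⟨β, hfix, hgreatest⟩ := exists_fixedPoint_forall_le_of_monotone
    (f := B ∘ A) (hB_anti.comp hA_anti)
    (lo := B fun x => log (n x)) (hB_anti fun x => le_log_of_totalMass_eq (hA _ x))
    (hi := fun y => log (m y)) (fun _ y => le_log_of_totalMass_eq (hB _ y))
  refine ⟨A β, β, ⟨hA β, fun y => ?_⟩, fun α' β' h' => hgreatest β' ?_⟩
  · simpa only [show B (A β) = β from hfix] using hB (A β) y
  · have hα' : α' = A β' := funext fun x =>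
      (strictMono_totalMass fun y => hmono₁ x y _).injective ((h'.1 x).trans (hA β' x).symm)
    subst hα'
    exact fun y => ((strictMono_totalMass fun x => hmono₂ x y _).injective
      ((h'.2 y).trans (hB _ y).symm)).le

theorem existsUnique_isLogSolution (hn : ∀ x, 0 < n x) (hm : ∀ y, 0 < m y)
    (hmono : ∀ x y a a' b b', a ≤ a' → b ≤ b' → σ x y a b ≤ σ x y a' b')
    (hcont : ∀ x y, Continuous fun p : ℝ × ℝ => σ x y p.1 p.2)
    (hbot₁ : ∀ x y b, Tendsto (σ x y · b) atBot atBot)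
    (hbot₂ : ∀ x y a, Tendsto (σ x y a ·) atBot atBot) :
    ∃! p : (X → ℝ) × (Y → ℝ), IsLogSolution n m σ p.1 p.2 := by
  obtain ⟨α, β, h, hgreatest⟩ := exists_isLogSolution_forall_le hn hm hmono hcont hbot₁ hbot₂
  refine ⟨(α, β), h, fun ⟨α', β'⟩ h' => ?_⟩
  obtain ⟨rfl, rfl⟩ := h.eq_of_le hmono h' (hgreatest α' β' h')
  rfl

def IsAggregateEquilibrium (n : X → ℝ) (m : Y → ℝ) (T : ℝ) (Ψ : X → Y → ℝ → ℝ → ℝ)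
    (μ : X → Y → ℝ) (a : X → ℝ) (b : Y → ℝ) : Prop :=
  (∀ x y, 0 < μ x y) ∧ (∀ x, 0 < a x) ∧ (∀ y, 0 < b y) ∧
    (∀ x, a x + ∑ y, μ x y = n x) ∧ (∀ y, b y + ∑ x, μ x y = m y) ∧
    ∀ x y, Ψ x y (T * log (μ x y / a x)) (T * log (μ x y / b y)) = 0

variable {T : ℝ} {Ψ : X → Y → ℝ → ℝ → ℝ}

theorem IsLogSolution.isAggregateEquilibrium
    (hσ : ∀ x y α β, Ψ x y (T * (σ x y α β - α)) (T * (σ x y α β - β)) = 0)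
    {α : X → ℝ} {β : Y → ℝ} (h : IsLogSolution n m σ α β) :
    IsAggregateEquilibrium n m T Ψ (fun x y => exp (σ x y (α x) (β y)))
      (fun x => exp (α x)) (fun y => exp (β y)) :=
  ⟨fun _ _ => exp_pos _, fun _ => exp_pos _, fun _ => exp_pos _, h.1, h.2,
    fun x y => by simpa only [← exp_sub, log_exp] using hσ x y (α x) (β y)⟩

theorem IsAggregateEquilibrium.isLogSolution (hT : 0 < T)
    (hstrict : ∀ x y (t t' r r' : ℝ), t < t' → r < r' → Ψ x y t r < Ψ x y t' r')
    (hσ : ∀ x y α β, Ψ x y (T * (σ x y α β - α)) (T * (σ x y α β - β)) = 0)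
    {μ : X → Y → ℝ} {a : X → ℝ} {b : Y → ℝ} (h : IsAggregateEquilibrium n m T Ψ μ a b) :
    (∀ x y, μ x y = exp (σ x y (log (a x)) (log (b y)))) ∧
      IsLogSolution n m σ (fun x => log (a x)) (fun y => log (b y)) := by
  obtain ⟨hμ, ha, hb, hrow, hcol, hΨ⟩ := h
  have hμσ : ∀ x y, μ x y = exp (σ x y (log (a x)) (log (b y))) := fun x y => by
    rw [← eq_root_of_gap_eq_zero hT (hstrict x y) (hσ x y) (by
      simpa only [log_div (hμ x y).ne' (ha x).ne', log_div (hμ x y).ne' (hb y).ne'] using hΨ x y),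
      exp_log (hμ x y)]
  refine ⟨hμσ, fun x => ?_, fun y => ?_⟩
  · simpa only [totalMass, exp_log (ha x), ← hμσ] using hrow x
  · simpa only [totalMass, exp_log (hb y), ← hμσ] using hcol y

end LogSystem

theorem aggregate_matching_system_solution_general
    {X Y : Type*} [Fintype X] [Fintype Y]
    (n : X → ℝ) (m : Y → ℝ) (hn : ∀ x, 0 < n x) (hm : ∀ y, 0 < m y)
    (T : ℝ) (hT : 0 < T)
    (Ψ : X → Y → ℝ → ℝ → ℝ)
    (hcont : ∀ x y, Continuous fun p : ℝ × ℝ => Ψ x y p.1 p.2)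
    (hstrict : ∀ x y (t t' r r' : ℝ), t < t' → r < r' → Ψ x y t r < Ψ x y t' r')
    -- limits in each argument, the other being fixed
    (htop₁ : ∀ x y (r : ℝ), Tendsto (fun t => Ψ x y t r) atTop atTop)
    (hbot₁ : ∀ x y (r : ℝ), Tendsto (fun t => Ψ x y t r) atBot atBot)
    (htop₂ : ∀ x y (t : ℝ), Tendsto (fun r => Ψ x y t r) atTop atTop) :
    (∃ (μ : X → Y → ℝ) (a : X → ℝ) (b : Y → ℝ),
      (∀ x y, 0 < μ x y) ∧ (∀ x, 0 < a x) ∧ (∀ y, 0 < b y) ∧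
      (∀ x, a x + ∑ y, μ x y = n x) ∧
      (∀ y, b y + ∑ x, μ x y = m y) ∧
      (∀ x y, Ψ x y (T * Real.log (μ x y / a x)) (T * Real.log (μ x y / b y)) = 0)) ∧
    ((∀ x y, ContDiff ℝ 1 fun p : ℝ × ℝ => Ψ x y p.1 p.2) →
      ∀ (μ μ' : X → Y → ℝ) (a a' : X → ℝ) (b b' : Y → ℝ),
        (∀ x y, 0 < μ x y) → (∀ x, 0 < a x) → (∀ y, 0 < b y) →
        (∀ x, a x + ∑ y, μ x y = n x) →
        (∀ y, b y + ∑ x, μ x y = m y) →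
        (∀ x y, Ψ x y (T * Real.log (μ x y / a x)) (T * Real.log (μ x y / b y)) = 0) →
        (∀ x y, 0 < μ' x y) → (∀ x, 0 < a' x) → (∀ y, 0 < b' y) →
        (∀ x, a' x + ∑ y, μ' x y = n x) →
        (∀ y, b' y + ∑ x, μ' x y = m y) →
        (∀ x y, Ψ x y (T * Real.log (μ' x y / a' x)) (T * Real.log (μ' x y / b' y)) = 0) →
        μ = μ' ∧ a = a' ∧ b = b') := by
  choose σ hσ using fun x y =>
    exists_gap_eq_zero hT (hcont x y) (hstrict x y) (htop₁ x y) (hbot₁ x y)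
  have hsol : ∃! p : (X → ℝ) × (Y → ℝ), IsLogSolution n m σ p.1 p.2 :=
    existsUnique_isLogSolution hn hm (fun x y _ _ _ _ => root_mono hT (hstrict x y) (hσ x y))
      (fun x y => continuous_root hT (hcont x y) (hstrict x y) (hσ x y))
      (fun x y => tendsto_root_atBot_left hT (hstrict x y) (htop₁ x y) (hσ x y))
      (fun x y => tendsto_root_atBot_right hT (hstrict x y) (htop₂ x y) (hσ x y))
  obtain ⟨⟨α, β⟩, hαβ⟩ := hsol.exists
  refine ⟨⟨_, _, _, hαβ.isAggregateEquilibrium hσ⟩,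
    fun _ μ μ' a a' b b' hμ ha hb hrow hcol hΨ hμ' ha' hb' hrow' hcol' hΨ' => ?_⟩
  obtain ⟨hμσ, hlog⟩ := IsAggregateEquilibrium.isLogSolution hT hstrict hσ
    ⟨hμ, ha, hb, hrow, hcol, hΨ⟩
  obtain ⟨hμσ', hlog'⟩ := IsAggregateEquilibrium.isLogSolution hT hstrict hσ
    ⟨hμ', ha', hb', hrow', hcol', hΨ'⟩
  obtain ⟨hα, hβ⟩ := Prod.ext_iff.1 (hsol.unique (y₁ := (_, _)) (y₂ := (_, _)) hlog hlog')
  obtain rfl : a = a' := funext fun x => log_injOn_pos (ha x) (ha' x) (congrFun hα x)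
  obtain rfl : b = b' := funext fun y => log_injOn_pos (hb y) (hb' y) (congrFun hβ y)
  exact ⟨funext fun x => funext fun y => (hμσ x y).trans (hμσ' x y).symm, rfl, rfl⟩

/-- Existence of a positive solution of the aggregate matching system, and its
uniqueness when each `Ψ_{xy}` is continuously differentiable. -/
theorem aggregate_matching_system_solution
    {X Y : Type*} [Fintype X] [Fintype Y]
    (n : X → ℝ) (m : Y → ℝ) (hn : ∀ x, 0 < n x) (hm : ∀ y, 0 < m y)
    (T : ℝ) (hT : 0 < T)
    (Ψ : X → Y → ℝ → ℝ → ℝ)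
    (hcont : ∀ x y, Continuous fun p : ℝ × ℝ => Ψ x y p.1 p.2)
    (hstrict : ∀ x y (t t' r r' : ℝ), t < t' → r < r' → Ψ x y t r < Ψ x y t' r')
    -- limits in each argument, the other being fixed
    (htop₁ : ∀ x y (r : ℝ), Tendsto (fun t => Ψ x y t r) atTop atTop)
    (hbot₁ : ∀ x y (r : ℝ), Tendsto (fun t => Ψ x y t r) atBot atBot)
    (htop₂ : ∀ x y (t : ℝ), Tendsto (fun r => Ψ x y t r) atTop atTop)
    (hbot₂ : ∀ x y (t : ℝ), Tendsto (fun r => Ψ x y t r) atBot atBot) :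
    (∃ (μ : X → Y → ℝ) (a : X → ℝ) (b : Y → ℝ),
      (∀ x y, 0 < μ x y) ∧ (∀ x, 0 < a x) ∧ (∀ y, 0 < b y) ∧
      (∀ x, a x + ∑ y, μ x y = n x) ∧
      (∀ y, b y + ∑ x, μ x y = m y) ∧
      (∀ x y, Ψ x y (T * Real.log (μ x y / a x)) (T * Real.log (μ x y / b y)) = 0)) ∧
    ((∀ x y, ContDiff ℝ 1 fun p : ℝ × ℝ => Ψ x y p.1 p.2) →
      ∀ (μ μ' : X → Y → ℝ) (a a' : X → ℝ) (b b' : Y → ℝ),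
        (∀ x y, 0 < μ x y) → (∀ x, 0 < a x) → (∀ y, 0 < b y) →
        (∀ x, a x + ∑ y, μ x y = n x) →
        (∀ y, b y + ∑ x, μ x y = m y) →
        (∀ x y, Ψ x y (T * Real.log (μ x y / a x)) (T * Real.log (μ x y / b y)) = 0) →
        (∀ x y, 0 < μ' x y) → (∀ x, 0 < a' x) → (∀ y, 0 < b' y) →
        (∀ x, a' x + ∑ y, μ' x y = n x) →
        (∀ y, b' y + ∑ x, μ' x y = m y) →
        (∀ x y, Ψ x y (T * Real.log (μ' x y / a' x)) (T * Real.log (μ' x y / b' y)) = 0) →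
        μ = μ' ∧ a = a' ∧ b = b') :=
  aggregate_matching_system_solution_general n m hn hm T hT Ψ hcont hstrict htop₁ hbot₁ htop₂
end
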